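/- arXiv:1812.11679 — 10 statements merged into one kernel-verified Lean document; each statement's English description precedes it below -/
import Mathlib

section
/- Let p be an odd prime and let a₁, a₂, a₃, a₄, a₅ ∈ ℤ/pℤ with aᵢ = 0 for at least one index i. Then for every nonzero m ∈ ℤ/pℤ, the number of vectors v = (v₁,…,v₅) ∈ (ℤ/pℤ)⁵ with a₁v₁² + a₂v₂² + a₃v₃² + a₄v₄² + a₅v₅² = m is at most 2p⁴. -/
/-!
Some coefficient `a j` is nonzero, since otherwise the form vanishes identically and misses
`m ≠ 0`. Once the other coordinates are fixed, `v j` solves an equation `a j * x ^ 2 = c`, which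
has at most two solutions; so every fibre of the projection forgetting the `j`-th coordinate
contains at most two solutions, and there are `p ^ 4` fibres.
-/

open Finset

section DiagonalForm

variable {ι R : Type*} [Fintype ι] [DecidableEq ι]
  [CommRing R] [IsDomain R] [Fintype R] [DecidableEq R]

theorem card_filter_mul_sq_add_eq_le_two {c : R} (hc : c ≠ 0) (d m : R) :
    #{x : R | c * x ^ 2 + d = m} ≤ 2 := by
  obtain ⟨x₀, hx₀⟩ | hempty := Finset.eq_empty_or_nonempty {x : R | c * x ^ 2 + d = m} |>.symm
  · have hsub : ({x : R | c * x ^ 2 + d = m} : Finset R) ⊆ {x₀, -x₀} := by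
      intro x hx
      simp only [mem_filter, mem_univ, true_and] at hx hx₀
      have hsq : x ^ 2 = x₀ ^ 2 := mul_left_cancel₀ hc (add_right_cancel (hx.trans hx₀.symm))
      simpa using sq_eq_sq_iff_eq_or_eq_neg.mp hsq
    exact (card_le_card hsub).trans card_le_two
  · simp [hempty]

theorem card_filter_sum_mul_sq_eq_le {a : ι → R} {j : ι} (hj : a j ≠ 0) (m : R) :
    #{v : ι → R | ∑ i, a i * v i ^ 2 = m} ≤ 2 * Fintype.card R ^ (Fintype.card ι - 1) := by
  let e := Equiv.piSplitAt j fun _ => R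
  have hsplit (v : ι → R) :
      ∑ i, a i * v i ^ 2 = a j * (e v).1 ^ 2 + ∑ i : {i // i ≠ j}, a i * (e v).2 i ^ 2 :=
    Fintype.sum_eq_add_sum_subtype_ne _ j
  have hfibre (w : {i // i ≠ j} → R) :
      #{v ∈ {v : ι → R | ∑ i, a i * v i ^ 2 = m} | (e v).2 = w} ≤ 2 := by
    calc _ ≤ #{x : R | a j * x ^ 2 + ∑ i : {i // i ≠ j}, a i * w i ^ 2 = m} :=
          card_le_card_of_injOn (fun v => (e v).1) ?_ ?_
      _ ≤ 2 := card_filter_mul_sq_add_eq_le_two hj _ m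
    · intro v hv
      simp only [coe_filter, mem_filter, mem_univ, true_and, Set.mem_ofPred_eq] at hv ⊢
      rw [← hv.2, ← hsplit, hv.1]
    · intro v hv v' hv' h
      simp only [coe_filter, mem_filter, mem_univ, true_and, Set.mem_ofPred_eq] at hv hv'
      exact e.injective (Prod.ext h (hv.2.trans hv'.2.symm))
  calc #{v : ι → R | ∑ i, a i * v i ^ 2 = m}
      ≤ 2 * #(univ : Finset ({i // i ≠ j} → R)) :=
        card_le_mul_card_image_of_maps_to (fun _ _ => mem_univ _) 2 fun w _ => hfibre w
    _ = 2 * Fintype.card R ^ (Fintype.card ι - 1) := by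
        simp [Fintype.card_subtype_compl]

end DiagonalForm

theorem count_diagonal_quinary_le_general
    (p : ℕ) [Fact p.Prime]
    (a : Fin 5 → ZMod p)
    (m : ZMod p) (hm : m ≠ 0) :
    (Finset.univ.filter
        (fun v : Fin 5 → ZMod p => ∑ i, a i * v i ^ 2 = m)).card ≤ 2 * p ^ 4 := by
  by_cases hzero : ∀ i, a i = 0
  · simp [hzero, hm.symm]
  · push Not at hzero
    obtain ⟨j, hj⟩ := hzero
    simpa using card_filter_sum_mul_sq_eq_le hj m

/-- Lemma 4.16 (lem_den_L'''): for an odd prime `p` and a diagonal quinary quadratic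
form over `ℤ/pℤ` with at least one zero coefficient, a nonzero value `m` is
represented at most `2p⁴` times. -/
theorem count_diagonal_quinary_le
    (p : ℕ) [Fact p.Prime] (hp2 : p ≠ 2)
    (a : Fin 5 → ZMod p) (ha : ∃ i, a i = 0)
    (m : ZMod p) (hm : m ≠ 0) :
    (Finset.univ.filter
        (fun v : Fin 5 → ZMod p => ∑ i, a i * v i ^ 2 = m)).card ≤ 2 * p ^ 4 :=
  count_diagonal_quinary_le_general p a m hm
end

section
/- Let p ≥ 3 be a prime, let A be a positive integer, and let a be an integer with 0 ≤ 2a ≤ A. Set A₋₁ = ⌊A/p⌋ and, for n ≥ 0, Aₙ = ⌊A·(pⁿ + p^{n−1} + ⋯ + p + 1 + 1/p)⌋. Let (r_{n,1})_{n≥0} and (r_{n,2})_{n≥0} be sequences of nonnegative real numbers which are eventually zero and satisfy r_{n,2} ≤ r_{n,1} and r_{n+1,2} ≤ r_{n,2} for all n ≥ 0. Then (A₋₁ + a)·r_{0,1} + (A₀ − A₋₁ − a)·r_{0,2} + ∑_{n≥1} ( a·pⁿ·r_{n,1} + (Aₙ − A_{n−1} − a·pⁿ)·r_{n,2} ) ≤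 (A(p+2)/(2p))·r_{0,1} + (A/2)·r_{0,2} + ∑_{n≥1} (A·pⁿ/2)·(r_{n,1} + r_{n,2}). -/
/-!
Since `Aₙ₊₁ - Aₙ = A pⁿ⁺¹` and `A₀ = A + A₋₁`, the inequality holds termwise. Each term has the
shape `α x + (β - α) y` with `y ≤ x` and `2α ≤ β`, which is at most the average `β (x + y) / 2`;
the extra `A₋₁ r_{0,1}` in the first term is absorbed by `A₋₁ ≤ A / p`.
-/

open Finset

section Floor

variable {K : Type*} [Field K] [LinearOrder K] [IsStrictOrderedRing K] [FloorRing K]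

theorem floor_mul_geom_sum_add_succ (A p : ℕ) (c : K) (n : ℕ) :
    ⌊(A : K) * (∑ i ∈ range (n + 2), (p : K) ^ i + c)⌋
      = ⌊(A : K) * (∑ i ∈ range (n + 1), (p : K) ^ i + c)⌋ + A * p ^ (n + 1) := by
  have hsplit : (A : K) * (∑ i ∈ range (n + 2), (p : K) ^ i + c)
      = (A : K) * (∑ i ∈ range (n + 1), (p : K) ^ i + c) + ((A * p ^ (n + 1) : ℤ) : K) := by
    rw [sum_range_succ]
    push_cast
    ring
  rw [hsplit, Int.floor_add_intCast]

theorem floor_mul_one_add (A : ℕ) (c : K) : ⌊(A : K) * (1 + c)⌋ = A + ⌊(A : K) * c⌋ := by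
  rw [mul_one_add, ← Int.cast_natCast, Int.floor_intCast_add]

end Floor

theorem mul_add_sub_mul_le_half_mul_add {K : Type*} [Field K] [LinearOrder K]
    [IsStrictOrderedRing K] {a b x y : K} (hab : 2 * a ≤ b) (hyx : y ≤ x) :
    a * x + (b - a) * y ≤ b / 2 * (x + y) := by
  nlinarith [mul_nonneg (sub_nonneg.2 hab) (sub_nonneg.2 hyx)]

theorem summable_of_forall_le_eq_zero {α : Type*} [AddCommMonoid α] [TopologicalSpace α]
    {f : ℕ → α} {N : ℕ} (hf : ∀ n, N ≤ n → f n = 0) : Summable f :=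
  summable_of_ne_finset_zero (s := range N) fun n hn => hf n (by simpa using hn)

theorem local_multiplicity_bound_general
    (p : ℕ) (hp : p.Prime)
    (A : ℕ) (a : ℕ) (ha : 2 * a ≤ A)
    (r1 r2 : ℕ → ℝ)
    (hr1 : ∀ n, 0 ≤ r1 n)
    (h21 : ∀ n, r2 n ≤ r1 n)
    (hev1 : ∃ N, ∀ n, N ≤ n → r1 n = 0)
    (hev2 : ∃ N, ∀ n, N ≤ n → r2 n = 0)
    (Am1 : ℤ) (hAm1 : Am1 = ⌊(A : ℚ) / (p : ℚ)⌋)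
    (Aseq : ℕ → ℤ)
    (hAseq : ∀ n, Aseq n =
      ⌊(A : ℚ) * ((∑ i ∈ Finset.range (n + 1), (p : ℚ) ^ i) + ((p : ℚ))⁻¹)⌋) :
    ((Am1 : ℝ) + (a : ℝ)) * r1 0 + ((Aseq 0 : ℝ) - (Am1 : ℝ) - (a : ℝ)) * r2 0
      + (∑' n : ℕ, ((a : ℝ) * (p : ℝ) ^ (n + 1) * r1 (n + 1)
          + ((Aseq (n + 1) : ℝ) - (Aseq n : ℝ) - (a : ℝ) * (p : ℝ) ^ (n + 1)) * r2 (n + 1)))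
    ≤ ((A : ℝ) * ((p : ℝ) + 2) / (2 * (p : ℝ))) * r1 0 + ((A : ℝ) / 2) * r2 0
      + (∑' n : ℕ, ((A : ℝ) * (p : ℝ) ^ (n + 1) / 2) * (r1 (n + 1) + r2 (n + 1))) := by
  obtain ⟨N1, hN1⟩ := hev1
  obtain ⟨N2, hN2⟩ := hev2
  have hp0 : (0 : ℝ) < p := by exact_mod_cast hp.pos
  have ha' : 2 * (a : ℝ) ≤ A := by exact_mod_cast ha
  have hAm1_le : (Am1 : ℝ) ≤ A / p := by
    have h : ((Am1 : ℚ) : ℝ) ≤ ((A / p : ℚ) : ℝ) := by exact_mod_cast hAm1 ▸ Int.floor_le _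
    simpa using h
  have hA0 : Aseq 0 = A + Am1 := by
    rw [hAseq, hAm1, sum_range_one, pow_zero, floor_mul_one_add, div_eq_mul_inv]
  have hstep (n : ℕ) : Aseq (n + 1) = Aseq n + A * p ^ (n + 1) := by
    rw [hAseq, hAseq, floor_mul_geom_sum_add_succ]
  have head : ((Am1 : ℝ) + a) * r1 0 + ((Aseq 0 : ℝ) - Am1 - a) * r2 0
      ≤ (A * (p + 2) / (2 * p)) * r1 0 + (A / 2) * r2 0 := by
    have hcoef : (A : ℝ) * (p + 2) / (2 * p) = A / p + A / 2 := by field_simp; ring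
    rw [hA0, hcoef]
    push_cast
    linarith [mul_add_sub_mul_le_half_mul_add ha' (h21 0),
      mul_le_mul_of_nonneg_right hAm1_le (hr1 0)]
  have htail (n : ℕ) : (a : ℝ) * p ^ (n + 1) * r1 (n + 1)
      + ((Aseq (n + 1) : ℝ) - Aseq n - a * p ^ (n + 1)) * r2 (n + 1)
      ≤ (A * p ^ (n + 1) / 2) * (r1 (n + 1) + r2 (n + 1)) := by
    rw [hstep]
    push_cast
    rw [add_sub_cancel_left]
    refine mul_add_sub_mul_le_half_mul_add ?_ (h21 (n + 1))
    rw [← mul_assoc]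
    exact mul_le_mul_of_nonneg_right ha' (by positivity)
  have hvanish (n : ℕ) (hn : max N1 N2 ≤ n) : r1 (n + 1) = 0 ∧ r2 (n + 1) = 0 :=
    ⟨hN1 _ (by omega), hN2 _ (by omega)⟩
  refine add_le_add head (Summable.tsum_le_tsum htail ?_ ?_) <;>
    refine summable_of_forall_le_eq_zero (N := max N1 N2) fun n hn => ?_ <;>
    simp [hvanish n hn]

/-- The inequality underlying Corollary 7.4(1) (lem_count): with
`A₋₁ = ⌊A/p⌋`, `Aₙ = ⌊A(pⁿ + ⋯ + p + 1 + 1/p)⌋` and decaying sequences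
`r_{n,1}, r_{n,2}`, the local intersection bound
`(A₋₁+a)r₀₁ + (A₀−A₋₁−a)r₀₂ + ∑_{n≥1}(apⁿ r_{n,1} + (Aₙ−A_{n−1}−apⁿ) r_{n,2})`
is at most
`(A(p+2)/(2p))r₀₁ + (A/2)r₀₂ + ∑_{n≥1}(Apⁿ/2)(r_{n,1}+r_{n,2})`. -/
theorem local_multiplicity_bound
    (p : ℕ) (hp : p.Prime) (hp3 : 3 ≤ p)
    (A : ℕ) (hA : 0 < A) (a : ℕ) (ha : 2 * a ≤ A)
    (r1 r2 : ℕ → ℝ)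
    (hr1 : ∀ n, 0 ≤ r1 n) (hr2 : ∀ n, 0 ≤ r2 n)
    (h21 : ∀ n, r2 n ≤ r1 n) (hmono : ∀ n, r2 (n + 1) ≤ r2 n)
    (hev1 : ∃ N, ∀ n, N ≤ n → r1 n = 0)
    (hev2 : ∃ N, ∀ n, N ≤ n → r2 n = 0)
    (Am1 : ℤ) (hAm1 : Am1 = ⌊(A : ℚ) / (p : ℚ)⌋)
    (Aseq : ℕ → ℤ)
    (hAseq : ∀ n, Aseq n =
      ⌊(A : ℚ) * ((∑ i ∈ Finset.range (n + 1), (p : ℚ) ^ i) + ((p : ℚ))⁻¹)⌋) :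
    ((Am1 : ℝ) + (a : ℝ)) * r1 0 + ((Aseq 0 : ℝ) - (Am1 : ℝ) - (a : ℝ)) * r2 0
      + (∑' n : ℕ, ((a : ℝ) * (p : ℝ) ^ (n + 1) * r1 (n + 1)
          + ((Aseq (n + 1) : ℝ) - (Aseq n : ℝ) - (a : ℝ) * (p : ℝ) ^ (n + 1)) * r2 (n + 1)))
    ≤ ((A : ℝ) * ((p : ℝ) + 2) / (2 * (p : ℝ))) * r1 0 + ((A : ℝ) / 2) * r2 0
      + (∑' n : ℕ, ((A : ℝ) * (p : ℝ) ^ (n + 1) / 2) * (r1 (n + 1) + r2 (n + 1))) :=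
  local_multiplicity_bound_general p hp A a ha r1 r2 hr1 h21 hev1 hev2 Am1 hAm1 Aseq hAseq
end

section
/- Let Q be a positive-definite integer-valued quadratic form on the free ℤ-module L = ℤ⁵, let p be a prime, and suppose L = Λ₀ ⊕ Λ₁ is an internal direct sum of submodules with Λ₀ of rank 3 and Λ₁ of rank 2. Then there exists a constant c > 0, depending only on Q and the decomposition, such that for every integer n ≥ 0, every i ∈ {3,4,5}, and every ℤ-linearly independent family v₁, …, vᵢ of elements of the submodule pⁿΛ₀ + Λ₁, one has ∏_{j=1}^{i} Q(vⱼ) ≥ c·p^{2(i−2)n}. -/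
/-!
Let `G` be the Gram matrix of a basis of `Λ₁` for the polar form of `Q`. By Cramer's rule,
for every `x` the vector `det G • x` is congruent modulo `Λ₁` to a vector orthogonal to `Λ₁`.
For `0 ≠ u ∈ Λ₀` this vector `r` is nonzero and integral, so `det G • (t • u + w)` splits
orthogonally as `t • r` plus an element of `Λ₁`, whence `(det G)² Q(t • u + w) ≥ t² Q r ≥ t²`.
With `t = pⁿ`, each `vⱼ ∉ Λ₁` has `Q vⱼ ≫ p^{2n}`, and at most `rank Λ₁ = 2` of the
independent `vⱼ` lie in `Λ₁`.
-/

open Finset Module Matrix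

namespace LinearMap.BilinForm

variable {R M ι : Type*} [CommRing R] [AddCommGroup M] [Module R M] [Fintype ι] [DecidableEq ι]

theorem exists_det_smul_sub_mem_orthogonal (B : LinearMap.BilinForm R M) {N : Submodule R M}
    (b : Basis ι R N) (x : M) :
    ∃ z ∈ N, (toMatrix b (B.restrict N)).det • x - z ∈ B.orthogonal N := by
  set G := toMatrix b (B.restrict N)
  set a := G.adjugate *ᵥ fun l => B (b l) x
  refine ⟨∑ k, a k • (b k : M), N.sum_mem fun k _ => N.smul_mem _ (b k).2, ?_⟩
  have hGa : G *ᵥ a = G.det • fun l => B (b l) x := by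
    rw [mulVec_mulVec, mul_adjugate, smul_mulVec, one_mulVec]
  have hbasis : ∀ l, B (b l) (G.det • x - ∑ k, a k • (b k : M)) = 0 := by
    intro l
    have := congrFun hGa l
    simp only [mulVec, dotProduct, G, toMatrix_apply, restrict_apply, domRestrict_apply,
      Pi.smul_apply, smul_eq_mul] at this
    simp only [map_sub, map_sum, map_smul, smul_eq_mul, mul_comm (a _), this]
    ring
  intro n hn
  obtain ⟨c, rfl⟩ := (b.mem_submodule_iff').1 hn
  simp [hbasis]

end LinearMap.BilinForm

theorem QuadraticMap.Anisotropic.det_toMatrix_restrict_polarBilin_ne_zero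
    {R M ι : Type*} [CommRing R] [IsDomain R] [CharZero R] [AddCommGroup M] [Module R M]
    [Fintype ι] [DecidableEq ι] {Q : QuadraticForm R M} (hQ : Q.Anisotropic)
    {N : Submodule R M} (b : Basis ι R N) :
    (LinearMap.BilinForm.toMatrix b (LinearMap.BilinForm.restrict Q.polarBilin N)).det ≠ 0 := by
  rw [← Matrix.separatingLeft_iff_det_ne_zero, LinearMap.BilinForm.separatingLeft_toMatrix_iff]
  intro x hx
  have hpolar : polar Q x x = 0 := hx x
  rw [polar_self, two_nsmul, add_self_eq_zero] at hpolar
  exact Subtype.ext (hQ _ hpolar)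

theorem QuadraticMap.PosDef.exists_sq_le_mul_apply_smul_add {M : Type*} [AddCommGroup M]
    {Q : QuadraticForm ℤ M} (hQ : Q.PosDef) {Λ₀ Λ₁ : Submodule ℤ M} [Module.Free ℤ Λ₁]
    [Module.Finite ℤ Λ₁] (hinf : Λ₀ ⊓ Λ₁ = ⊥) :
    ∃ C : ℤ, 0 < C ∧ ∀ u ∈ Λ₀, u ≠ 0 → ∀ w ∈ Λ₁, ∀ t : ℤ, t ^ 2 ≤ C * Q (t • u + w) := by
  classical
  let b := Module.Free.chooseBasis ℤ Λ₁
  set D := (LinearMap.BilinForm.toMatrix b (LinearMap.BilinForm.restrict Q.polarBilin Λ₁)).det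
  have hD : D ≠ 0 := hQ.anisotropic.det_toMatrix_restrict_polarBilin_ne_zero b
  refine ⟨D ^ 2, by positivity, fun u hu hu0 w hw t => ?_⟩
  obtain ⟨z, hz, hr⟩ := LinearMap.BilinForm.exists_det_smul_sub_mem_orthogonal Q.polarBilin b u
  set r := D • u - z
  have hr0 : r ≠ 0 := by
    intro h
    have hDu : D • u ∈ Λ₀ ⊓ Λ₁ := ⟨Λ₀.smul_mem D hu, sub_eq_zero.1 h ▸ hz⟩
    rw [hinf, Submodule.mem_bot] at hDu
    have : D * D * Q u = 0 := by rw [← smul_eq_mul, ← Q.map_smul, hDu, map_zero]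
    exact (hQ u hu0).ne' (by simpa [hD] using this)
  have hn : t • z + D • w ∈ Λ₁ := add_mem (Λ₁.smul_mem t hz) (Λ₁.smul_mem D hw)
  have hortho : Q.IsOrtho (t • z + D • w) (t • r) :=
    QuadraticMap.isOrtho_polarBilin.1 (Submodule.smul_mem _ t hr _ hn)
  have hsplit : D • (t • u + w) = (t • z + D • w) + t • r := by
    simp only [r]
    module
  calc t ^ 2 ≤ t ^ 2 * Q r := le_mul_of_one_le_right (sq_nonneg t) (hQ r hr0)
    _ = Q (t • r) := by rw [Q.map_smul]; ring
    _ ≤ Q (t • z + D • w) + Q (t • r) := le_add_of_nonneg_left (hQ.nonneg _)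
    _ = Q (D • (t • u + w)) := by rw [hsplit, QuadraticMap.isOrtho_def.1 hortho]
    _ = D ^ 2 * Q (t • u + w) := by rw [Q.map_smul]; ring

theorem LinearIndependent.card_filter_mem_le_finrank {R M ι : Type*} [Ring R]
    [StrongRankCondition R] [AddCommGroup M] [Module R M] [Fintype ι] {v : ι → M}
    (hv : LinearIndependent R v) (N : Submodule R M) [Module.Finite R N]
    [DecidablePred (v · ∈ N)] :
    #{j | v j ∈ N} ≤ finrank R N := by
  have hvN : LinearIndependent R fun j : {j // v j ∈ N} => (⟨v j, j.2⟩ : N) :=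
    .of_comp N.subtype (hv.comp _ Subtype.val_injective)
  simpa [Fintype.card_subtype] using hvN.fintype_card_le_finrank

theorem Finset.pow_card_compl_le_prod {ι R : Type*} [Fintype ι] [DecidableEq ι] [CommSemiring R]
    [PartialOrder R] [IsOrderedRing R] {f : ι → R} {a : R} (s : Finset ι) (ha : 0 ≤ a)
    (hf : ∀ j, 1 ≤ f j) (hfa : ∀ j ∉ s, a ≤ f j) :
    a ^ #sᶜ ≤ ∏ j, f j :=
  calc a ^ #sᶜ = ∏ _ ∈ sᶜ, a := (prod_const a).symm
    _ ≤ ∏ j ∈ sᶜ, f j := prod_le_prod (fun _ _ => ha) fun j hj => hfa j (mem_compl.1 hj)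
    _ ≤ ∏ j, f j := prod_le_prod_of_subset_of_one_le (subset_univ _)
        (fun j _ => zero_le_one.trans (hf j)) fun j _ _ => hf j

theorem successive_minima_lower_bound_general
    (Q : QuadraticForm ℤ (Fin 5 → ℤ))
    (hQ : ∀ v : Fin 5 → ℤ, v ≠ 0 → 0 < Q v)
    (p : ℕ) (hp : p.Prime)
    (Λ₀ Λ₁ : Submodule ℤ (Fin 5 → ℤ))
    (hrank1 : Module.finrank ℤ Λ₁ = 2)
    (hinf : Λ₀ ⊓ Λ₁ = ⊥) :
    ∃ c : ℝ, 0 < c ∧ ∀ n : ℕ, ∀ i : ℕ, (i = 3 ∨ i = 4 ∨ i = 5) →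
      ∀ v : Fin i → (Fin 5 → ℤ),
        (∀ j, ∃ u ∈ Λ₀, ∃ w ∈ Λ₁, v j = ((p : ℤ) ^ n) • u + w) →
        LinearIndependent ℤ v →
        c * (p : ℝ) ^ (2 * (i - 2) * n) ≤ ∏ j, (Q (v j) : ℝ) := by
  classical
  have hQ : Q.PosDef := hQ
  obtain ⟨C, hC, hbound⟩ := hQ.exists_sq_le_mul_apply_smul_add hinf
  refine ⟨((C : ℝ) ^ 5)⁻¹, by positivity, fun n i hi v hv hli => ?_⟩
  set X : ℤ := (p : ℤ) ^ (2 * n)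
  have hX : 1 ≤ X := one_le_pow₀ (by exact_mod_cast hp.one_lt.le)
  have hfar : ∀ j, v j ∉ Λ₁ → X ≤ C * Q (v j) := by
    intro j hj
    obtain ⟨u, hu, w, hw, hvj⟩ := hv j
    have hu0 : u ≠ 0 := by
      rintro rfl
      exact hj (by simpa [hvj] using hw)
    simpa [X, hvj, pow_mul'] using hbound u hu hu0 w hw ((p : ℤ) ^ n)
  have hnear : ∀ j, 1 ≤ C * Q (v j) := fun j =>
    one_le_mul_of_one_le_of_one_le hC (hQ _ (hli.ne_zero j))
  have hcard : #{j | v j ∈ Λ₁} ≤ 2 := hrank1 ▸ hli.card_filter_mem_le_finrank Λ₁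
  have hmain : X ^ (i - 2) ≤ C ^ 5 * ∏ j, Q (v j) :=
    calc X ^ (i - 2) ≤ X ^ #({j | v j ∈ Λ₁} : Finset (Fin i))ᶜ :=
          pow_le_pow_right₀ hX (by rw [card_compl, Fintype.card_fin]; omega)
      _ ≤ ∏ j, C * Q (v j) := pow_card_compl_le_prod _ (by positivity) hnear
          fun j hj => hfar j (by simpa using hj)
      _ = C ^ i * ∏ j, Q (v j) := by
        rw [prod_mul_distrib, prod_const, card_univ, Fintype.card_fin]
      _ ≤ C ^ 5 * ∏ j, Q (v j) := mul_le_mul_of_nonneg_right (pow_le_pow_right₀ hC (by omega))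
          (prod_nonneg fun j _ => hQ.nonneg _)
  rw [inv_mul_le_iff₀ (by positivity), show 2 * (i - 2) * n = 2 * n * (i - 2) by ring, pow_mul]
  exact_mod_cast hmain

/-- Lemma 8.1 (lem_el), enlarged-lattice form: for a positive-definite integral
quadratic form `Q` on `ℤ⁵` and a direct-sum decomposition `ℤ⁵ = Λ₀ ⊕ Λ₁` with
`Λ₀` of rank 3 and `Λ₁` of rank 2, there is `c > 0` such that any `i` linearly
independent vectors (`i ∈ {3,4,5}`) of `pⁿΛ₀ + Λ₁` satisfy
`∏ Q(vⱼ) ≥ c·p^{2(i−2)n}`. -/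
theorem successive_minima_lower_bound
    (Q : QuadraticForm ℤ (Fin 5 → ℤ))
    (hQ : ∀ v : Fin 5 → ℤ, v ≠ 0 → 0 < Q v)
    (p : ℕ) (hp : p.Prime)
    (Λ₀ Λ₁ : Submodule ℤ (Fin 5 → ℤ))
    (hrank0 : Module.finrank ℤ Λ₀ = 3) (hrank1 : Module.finrank ℤ Λ₁ = 2)
    (hinf : Λ₀ ⊓ Λ₁ = ⊥) (hsup : Λ₀ ⊔ Λ₁ = ⊤) :
    ∃ c : ℝ, 0 < c ∧ ∀ n : ℕ, ∀ i : ℕ, (i = 3 ∨ i = 4 ∨ i = 5) →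
      ∀ v : Fin i → (Fin 5 → ℤ),
        (∀ j, ∃ u ∈ Λ₀, ∃ w ∈ Λ₁, v j = ((p : ℤ) ^ n) • u + w) →
        LinearIndependent ℤ v →
        c * (p : ℝ) ^ (2 * (i - 2) * n) ≤ ∏ j, (Q (v j) : ℝ) :=
  successive_minima_lower_bound_general Q hQ p hp Λ₀ Λ₁ hrank1 hinf
end

section
/- Let p be an odd prime, k a field of characteristic p, and λ ∈ k with λ^p = −λ and λ ≠ 0. Let G be the 2×2 matrix over k with rows (1/2, −λ/2) and (1/(2λ), −1/2), and for N ≥ 0 set P_N = G·G^{(1)}⋯G^{(N)}, where G^{(i)} is the matrix obtained from G by raising every entry to the p^i-th power. Then: (1) for every N ≥ 0, P_N ≠ 0, the kernel of P_N is one-dimensional and is spanned by a vector whose entries lie in F_{p²} (i.e. satisfy x^{p²} = x), and the kernel contains no nonzero vector both of whose entries are F_p-rational (i.e. satisfy x^p = x); (2) if N and M are nonnegative integers with N ≢ M (mod 2), then P_N is not a k-scalar multiple of P_M. -/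
/-!
Write `λᵢ = λ ^ p ^ i`, so that `λᵢ₊₁ = -λᵢ`. Every Frobenius twist of `G` is the rank-one matrix
`½ (1, λᵢ⁻¹)ᵀ (1, -λᵢ)`, and the inner product of `(1, -λᵢ)` with `(1, λᵢ₊₁⁻¹)` is `2`, so the
product telescopes to `P_N = ½ (1, λ⁻¹)ᵀ (1, -λ_N)`. Its kernel is therefore the line spanned by
`(λ_N, 1)`, which has entries in `𝔽_{p²}`; an `𝔽_p`-rational `w` in it would satisfy both
`w₀ = λ_N w₁` and `w₀ = -λ_N w₁`. Finally `λ_N = (-1)^N λ` separates `P_N` from the multiples of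
`P_M` when `N` and `M` have different parities.
-/

namespace FrobeniusProduct

variable {k : Type*} [Field k]

-- `½ (1, μ⁻¹)ᵀ (1, -ν)`: `G` is `rankOneMatrix λ λ` and `P N` is `rankOneMatrix λ λ_N`.
def rankOneMatrix (μ ν : k) : Matrix (Fin 2) (Fin 2) k :=
  !![1/2, -ν/2; 1/(2*μ), -ν/(2*μ)]

lemma rankOneMatrix_self {μ : k} (hμ : μ ≠ 0) :
    rankOneMatrix μ μ = !![1/2, -μ/2; 1/(2*μ), -1/2] := by
  ext i j
  fin_cases i <;> fin_cases j <;> simp [rankOneMatrix]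
  field_simp

lemma rankOneMatrix_mul_rankOneMatrix_neg (μ : k) {ν : k} (hν : ν ≠ 0) (h2 : (2 : k) ≠ 0) :
    rankOneMatrix μ ν * rankOneMatrix (-ν) (-ν) = rankOneMatrix μ (-ν) := by
  ext i j
  fin_cases i <;> fin_cases j <;>
    simp [rankOneMatrix, Matrix.mul_apply, Fin.sum_univ_two] <;> field_simp <;> ring

lemma rankOneMatrix_map_pow (p : ℕ) [ExpChar k p] (μ ν : k) (i : ℕ) :
    (rankOneMatrix μ ν).map (· ^ p ^ i) = rankOneMatrix (μ ^ p ^ i) (ν ^ p ^ i) := by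
  simp_rw [← iterateFrobenius_def]
  ext a b
  fin_cases a <;> fin_cases b <;> simp [rankOneMatrix, map_div₀, map_ofNat]

lemma rankOneMatrix_ne_zero {μ ν : k} (h2 : (2 : k) ≠ 0) : rankOneMatrix μ ν ≠ 0 := fun h ↦ by
  simpa [rankOneMatrix, h2] using congrFun (congrFun h 0) 0

lemma rankOneMatrix_mulVec_eq_zero_iff {μ ν : k} (h2 : (2 : k) ≠ 0)
    (w : Fin 2 → k) : (rankOneMatrix μ ν).mulVec w = 0 ↔ w 0 = ν * w 1 := by
  constructor
  · intro h
    have h0 := congrFun h 0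
    simp only [rankOneMatrix, Matrix.mulVec, dotProduct, Fin.sum_univ_two, Pi.zero_apply,
      Matrix.of_apply, Matrix.cons_val', Matrix.cons_val_zero, Matrix.cons_val_one,
      Matrix.empty_val', Matrix.cons_val_fin_one] at h0
    field_simp at h0
    linear_combination h0
  · intro h
    ext j
    fin_cases j <;> simp [rankOneMatrix, Matrix.mulVec, dotProduct, Fin.sum_univ_two, h] <;> ring

lemma ker_rankOneMatrix {μ ν : k} (h2 : (2 : k) ≠ 0) :
    LinearMap.ker (rankOneMatrix μ ν).mulVecLin = Submodule.span k {![ν, 1]} := by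
  ext w
  rw [LinearMap.mem_ker, Matrix.mulVecLin_apply, rankOneMatrix_mulVec_eq_zero_iff h2,
    Submodule.mem_span_singleton]
  constructor
  · intro h
    refine ⟨w 1, funext fun j ↦ ?_⟩
    fin_cases j <;> simp [h, mul_comm]
  · rintro ⟨a, rfl⟩
    simp [mul_comm]

lemma eq_zero_of_pow_eq_self_of_eq_mul {p : ℕ} {ν : k} (hν : ν ^ p = -ν) (hν0 : ν ≠ 0)
    (h2 : (2 : k) ≠ 0) {w : Fin 2 → k} (hw : ∀ j, w j ^ p = w j) (h : w 0 = ν * w 1) :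
    w = 0 := by
  have hneg : w 0 = -ν * w 1 := by rw [← hw 0, h, mul_pow, hν, hw 1]
  have hw1 : w 1 = 0 := by
    have : 2 * ν * w 1 = 0 := by linear_combination hneg - h
    simpa [h2, hν0] using this
  ext j
  fin_cases j <;> simp [h, hw1]

lemma eq_of_rankOneMatrix_eq_smul {μ ν ν' c : k} (h2 : (2 : k) ≠ 0)
    (h : rankOneMatrix μ ν = c • rankOneMatrix μ ν') : ν = ν' := by
  have h00 := congrFun (congrFun h 0) 0
  have h01 := congrFun (congrFun h 0) 1
  simp only [rankOneMatrix, Matrix.smul_apply, Matrix.of_apply, Matrix.cons_val',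
    Matrix.cons_val_zero, Matrix.cons_val_one, Matrix.empty_val', Matrix.cons_val_fin_one,
    smul_eq_mul] at h00 h01
  have hc : c = 1 := by field_simp at h00; exact h00.symm
  rw [hc] at h01
  field_simp at h01
  linear_combination -h01

lemma pow_pow_succ_of_pow_eq_neg {p : ℕ} (hp : Odd p) {a : k} (ha : a ^ p = -a) (i : ℕ) :
    a ^ p ^ (i + 1) = -a ^ p ^ i := by
  rw [pow_succ', pow_mul, ha, (hp.pow).neg_pow]

lemma pow_pow_eq_neg_one_pow_mul {p : ℕ} (hp : Odd p) {a : k} (ha : a ^ p = -a) (i : ℕ) :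
    a ^ p ^ i = (-1) ^ i * a := by
  induction i with
  | zero => simp
  | succ i ih => rw [pow_pow_succ_of_pow_eq_neg hp ha, ih, pow_succ]; ring

lemma neg_one_pow_ne_neg_one_pow (h2 : (2 : k) ≠ 0) {N M : ℕ} (h : N % 2 ≠ M % 2) :
    (-1 : k) ^ N ≠ (-1) ^ M := by
  intro hNM
  have hodd : Odd (N + M) := Nat.odd_iff.2 (by omega)
  apply h2
  calc (2 : k) = 1 - (-1) ^ (N + M) := by rw [hodd.neg_one_pow]; ring
    _ = 1 - (-1) ^ (M + M) := by rw [pow_add, pow_add, hNM]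
    _ = 0 := by rw [Even.neg_one_pow ⟨M, rfl⟩, sub_self]

end FrobeniusProduct

open FrobeniusProduct

/-- Lemma 5.4 (reallineartopleft): with `G = !![1/2, −λ/2; 1/(2λ), −1/2]` over a
field of characteristic `p` and `P_N = G·G^{(1)}⋯G^{(N)}` (Frobenius twists),
(1) `P_N ≠ 0`, its kernel is spanned by a nonzero vector with `𝔽_{p²}`-entries
and contains no nonzero `𝔽_p`-rational vector; (2) `P_N`, `P_M` are not scalar
multiples of each other when `N ≢ M (mod 2)`. -/
theorem frobenius_product_kernel
    (p : ℕ) (hp : p.Prime) (hp2 : p ≠ 2)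
    (k : Type*) [Field k] [CharP k p]
    (lam : k) (hlam : lam ^ p = -lam) (hlam0 : lam ≠ 0)
    (G : Matrix (Fin 2) (Fin 2) k)
    (hG : G = !![1/2, -lam/2; 1/(2*lam), -1/2])
    (P : ℕ → Matrix (Fin 2) (Fin 2) k)
    (hP : ∀ N, P N =
      ((List.range (N + 1)).map (fun i => G.map (fun x => x ^ p ^ i))).prod) :
    (∀ N, P N ≠ 0 ∧
      (∃ v : Fin 2 → k, v ≠ 0 ∧ (∀ j, v j ^ p ^ 2 = v j) ∧
        LinearMap.ker (Matrix.mulVecLin (P N)) = Submodule.span k {v}) ∧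
      (∀ w : Fin 2 → k, (∀ j, w j ^ p = w j) → (P N).mulVec w = 0 → w = 0)) ∧
    (∀ N M : ℕ, N % 2 ≠ M % 2 → ∀ c : k, P N ≠ c • P M) := by
  have := ExpChar.prime (R := k) hp
  have hodd : Odd p := hp.odd_of_ne_two hp2
  have h2 : (2 : k) ≠ 0 := Ring.two_ne_zero (by rwa [ringChar.eq k p])
  rw [← rankOneMatrix_self hlam0] at hG
  subst hG
  have hPN : ∀ N, P N = rankOneMatrix lam (lam ^ p ^ N) := by
    intro N
    induction N with
    | zero => simp [hP]
    | succ N ih =>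
      rw [hP, List.range_succ, List.map_append, List.prod_append, ← hP, ih]
      simp [rankOneMatrix_map_pow, pow_pow_succ_of_pow_eq_neg hodd hlam,
        rankOneMatrix_mul_rankOneMatrix_neg lam (pow_ne_zero _ hlam0) h2]
  refine ⟨fun N ↦ ?_, fun N M hNM c hc ↦ ?_⟩
  · set ν := lam ^ p ^ N
    have hν : ν ^ p = -ν := by rw [← pow_mul, ← pow_succ, pow_pow_succ_of_pow_eq_neg hodd hlam]
    have hν2 : ν ^ p ^ 2 = ν := by rw [pow_two, pow_mul, hν, hodd.neg_pow, hν, neg_neg]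
    rw [hPN]
    refine ⟨rankOneMatrix_ne_zero h2, ⟨![ν, 1], by simp, fun j ↦ ?_, ker_rankOneMatrix h2⟩,
      fun w hw hPw ↦ eq_zero_of_pow_eq_self_of_eq_mul hν (pow_ne_zero _ hlam0) h2 hw
        ((rankOneMatrix_mulVec_eq_zero_iff h2 w).1 hPw)⟩
    fin_cases j <;> simp [hν2]
  · rw [hPN, hPN] at hc
    have hsign := eq_of_rankOneMatrix_eq_smul h2 hc
    rw [pow_pow_eq_neg_one_pow_mul hodd hlam, pow_pow_eq_neg_one_pow_mul hodd hlam] at hsign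
    exact neg_one_pow_ne_neg_one_pow h2 hNM (mul_right_cancel₀ hlam0 hsign)
end

section
/- Let p be an odd prime and let a, e, n be integers with a ≥ 1 and 1 ≤ e ≤ n. For integers 0 ≤ k ≤ n+1 define f(k) = a·( (1 + p^{2e})·(p^k − 1)/(p − 1) + p^k·(p^{2(n−k+1)} − 1)/(p − 1) ). Then f(n − e + 1) < f(k) for every k ∈ {0, 1, …, n+1} with k ≠ n − e + 1. -/
/-!
Multiplying by `p - 1` sums the geometric series: `(p - 1) f(k) + a (1 + p^{2e})` equals
`a (p^{k+2e} + p^{2(n+1)-k})`. The two exponents add up to `2(n+1+e)` whatever `k` is, and they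
coincide exactly at `k = n+1-e`; by AM-GM a sum `p^x + p^y` with `x + y` fixed is smallest, and
then strictly, when `x = y`.
-/

open Finset

theorem weighted_geom_sum_mul_sub_one {R : Type*} [CommRing R] (x c : R) (k j : ℕ) :
    (c * ∑ i ∈ range k, x ^ i + x ^ k * ∑ i ∈ range j, x ^ i) * (x - 1) + c
      = (c - 1) * x ^ k + x ^ (k + j) := by
  linear_combination c * geom_sum_mul x k + x ^ k * geom_sum_mul x j

theorem two_mul_pow_lt_pow_add_pow {R : Type*} [CommRing R] [LinearOrder R]
    [IsStrictOrderedRing R] {b : R} (hb : 1 < b) {s x y : ℕ} (hsum : x + y = 2 * s)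
    (hxy : x ≠ y) : 2 * b ^ s < b ^ x + b ^ y := by
  have hne : b ^ x ≠ b ^ y := fun h => hxy (pow_right_injective₀ (by linarith) hb.ne' h)
  have hprod : b ^ x * b ^ y = b ^ s * b ^ s := by rw [← pow_add, ← pow_add, hsum, two_mul]
  have hsq : 0 < (b ^ x - b ^ y) ^ 2 := sq_pos_iff.mpr (sub_ne_zero.mpr hne)
  have hx : 0 < b ^ x := by positivity
  have hy : 0 < b ^ y := by positivity
  have hs : 0 < b ^ s := by positivity
  nlinarith

theorem valuation_minimized_general
    (p : ℕ) (hp : p.Prime)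
    (a e n : ℕ) (ha : 1 ≤ a) (hen : e ≤ n)
    (f : ℕ → ℕ)
    (hf : ∀ k, f k = a * ((1 + p ^ (2 * e)) * (∑ i ∈ Finset.range k, p ^ i)
        + p ^ k * (∑ i ∈ Finset.range (2 * (n + 1 - k)), p ^ i))) :
    ∀ k : ℕ, k ≤ n + 1 → k ≠ n + 1 - e → f (n + 1 - e) < f k := by
  intro k hk hne
  have hp1 : (1 : ℤ) < p := by exact_mod_cast hp.one_lt
  have closed_form : ∀ j, ((p : ℤ) - 1) * f j + a * (1 + p ^ (2 * e))
      = a * (p ^ (j + 2 * e) + p ^ (j + 2 * (n + 1 - j))) := by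
    intro j
    rw [hf j]
    push_cast
    linear_combination (a : ℤ) * weighted_geom_sum_mul_sub_one (p : ℤ) (1 + p ^ (2 * e)) j
      (2 * (n + 1 - j))
  have hmin := closed_form (n + 1 - e)
  rw [show n + 1 - e + 2 * e = n + 1 + e by omega,
    show n + 1 - e + 2 * (n + 1 - (n + 1 - e)) = n + 1 + e by omega] at hmin
  have amgm := two_mul_pow_lt_pow_add_pow hp1 (s := n + 1 + e)
    (x := k + 2 * e) (y := k + 2 * (n + 1 - k)) (by omega) (by omega)
  have hlt : ((p : ℤ) - 1) * f (n + 1 - e) < ((p : ℤ) - 1) * f k := by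
    have := mul_lt_mul_of_pos_left amgm (show (0 : ℤ) < a by exact_mod_cast ha)
    linarith [closed_form k]
  exact_mod_cast lt_of_mul_lt_mul_left hlt (by linarith)

/-- Lemma 5.7(1) (realdecaytopleft), arithmetic content: the function
`f(k) = a((1+p^{2e})·(1+p+⋯+p^{k−1}) + p^k·(1+p+⋯+p^{2(n−k+1)−1}))` on
`{0,…,n+1}` has a strict unique minimum at `k = n−e+1`. -/
theorem valuation_minimized
    (p : ℕ) (hp : p.Prime) (hp2 : p ≠ 2)
    (a e n : ℕ) (ha : 1 ≤ a) (he1 : 1 ≤ e) (hen : e ≤ n)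
    (f : ℕ → ℕ)
    (hf : ∀ k, f k = a * ((1 + p ^ (2 * e)) * (∑ i ∈ Finset.range k, p ^ i)
        + p ^ k * (∑ i ∈ Finset.range (2 * (n + 1 - k)), p ^ i))) :
    ∀ k : ℕ, k ≤ n + 1 → k ≠ n + 1 - e → f (n + 1 - e) < f k :=
  valuation_minimized_general p hp a e n ha hen f hf
end

section
/- Let p be an odd prime and let A, B, g be positive integers. For integers n ≥ 0 and 0 ≤ f ≤ n, define v(f) = A·∑_{i=0}^{n−f−1} p^i + B·∑_{j=0}^{f−1} p^{n−f+2j} + g·p^{n+f}. If 0 ≤ f₁ < f₂ ≤ n with f₂ > f₁ + 1 and v(f₁) = v(f₂), then v(f₂) > v(f₂ − 1). Consequently, if the minimum of v over {0, 1, …, n} is attained at two distinct values f₁ < f₂, then f₂ = f₁ + 1; i.e. the minimum occurs at most twice, and if twice then at consecutive values of f. -/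
/-!
`v` is strictly convex on `{0, …, n}`. Its first summand has second difference
`A (p^(n-f-1) - p^(n-f-2)) ≥ 0`; the other two are built from terms whose second differences are
`p^e + p^(e+2) - 2 p^(e+1) = p^e (p - 1)^2`, which is positive for the last summand as `p ≥ 2`.
So the steps `v (f+1) - v f` increase strictly: if `v f₂ ≥ v (f₂ - 1)`, all steps before
`f₂ - 1` are negative and `v f₁ > v (f₂ - 1) ≥ v f₂`.
-/

open Finset

def StrictConvexUpTo {α : Type*} [Add α] [LT α] (v : ℕ → α) (n : ℕ) : Prop :=
  ∀ f, f + 2 ≤ n → v (f + 1) + v (f + 1) < v f + v (f + 2)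

namespace StrictConvexUpTo

variable {α : Type*} [AddCommMonoid α] [LinearOrder α] [IsOrderedCancelAddMonoid α]
  {v : ℕ → α} {n : ℕ}

theorem succ_lt_of_le (hv : StrictConvexUpTo v n) {f k : ℕ} (hfk : f ≤ k) (hk : k + 2 ≤ n)
    (h : v (k + 2) ≤ v (k + 1)) : v (k + 1) < v f := by
  have step : ∀ k, k + 2 ≤ n → v (k + 2) ≤ v (k + 1) → v (k + 1) < v k := fun k hk h ↦
    lt_of_add_lt_add_right <| (hv k hk).trans_le (add_le_add_right h _)
  induction k with
  | zero => simpa [Nat.le_zero.mp hfk] using step 0 hk h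
  | succ k ih =>
    have hdec := step (k + 1) hk h
    rcases hfk.eq_or_lt with rfl | hlt
    · exact hdec
    · exact hdec.trans (ih (Nat.lt_succ_iff.mp hlt) (by omega) hdec.le)

theorem pred_lt_of_eq (hv : StrictConvexUpTo v n) {f₁ f₂ : ℕ} (hgap : f₁ + 1 < f₂)
    (hf₂ : f₂ ≤ n) (heq : v f₁ = v f₂) : v (f₂ - 1) < v f₂ := by
  obtain ⟨k, rfl⟩ : ∃ k, f₂ = k + 2 := ⟨f₂ - 2, by omega⟩
  by_contra! hle
  have := hv.succ_lt_of_le (f := f₁) (by omega) hf₂ hle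
  exact (heq ▸ this).not_ge hle

theorem eq_succ_of_isMinOn (hv : StrictConvexUpTo v n) {f₁ f₂ : ℕ} (hlt : f₁ < f₂)
    (hf₂ : f₂ ≤ n) (h₁ : IsMinOn v (Set.Iic n) f₁) (h₂ : IsMinOn v (Set.Iic n) f₂) :
    f₂ = f₁ + 1 := by
  by_contra hne
  have heq : v f₁ = v f₂ := le_antisymm (h₁ (Set.mem_Iic.mpr hf₂)) (h₂ (Set.mem_Iic.mpr (by omega)))
  exact (hv.pred_lt_of_eq (by omega) hf₂ heq).not_ge (h₂ (Set.mem_Iic.mpr (by omega)))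

end StrictConvexUpTo

theorem two_mul_pow_succ_le (p e : ℕ) : 2 * p ^ (e + 1) ≤ p ^ e + p ^ (e + 2) := by
  have h : (2 * p : ℤ) ≤ 1 + p ^ 2 := by nlinarith [sq_nonneg ((p : ℤ) - 1)]
  have := mul_le_mul_of_nonneg_left h (pow_nonneg (Int.natCast_nonneg p) e)
  zify
  linear_combination this

theorem two_mul_pow_succ_lt {p : ℕ} (hp : 2 ≤ p) (e : ℕ) :
    2 * p ^ (e + 1) < p ^ e + p ^ (e + 2) := by
  have h : (2 * p : ℤ) < 1 + p ^ 2 := by nlinarith [(by exact_mod_cast hp : (2 : ℤ) ≤ p)]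
  have := mul_lt_mul_of_pos_left h (pow_pos (by positivity : (0 : ℤ) < p) e)
  zify
  linear_combination this

theorem two_mul_geom_sum_succ_le {p : ℕ} (hp : 1 ≤ p) (m : ℕ) :
    2 * ∑ i ∈ range (m + 1), p ^ i ≤ ∑ i ∈ range (m + 2), p ^ i + ∑ i ∈ range m, p ^ i := by
  have : p ^ m ≤ p ^ (m + 1) := Nat.pow_le_pow_right hp m.le_succ
  simp only [sum_range_succ]
  omega

theorem two_mul_sum_pow_odd_le (p e f : ℕ) :
    2 * ∑ j ∈ range (f + 1), p ^ (e + 1 + 2 * j) ≤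
      ∑ j ∈ range f, p ^ (e + 2 + 2 * j) + ∑ j ∈ range (f + 2), p ^ (e + 2 * j) := by
  induction f with
  | zero => simpa [sum_range_succ] using two_mul_pow_succ_le p e
  | succ f ih =>
    have := two_mul_pow_succ_le p (e + 2 * f + 2)
    rw [sum_range_succ (fun j ↦ p ^ (e + 1 + 2 * j)), sum_range_succ (fun j ↦ p ^ (e + 2 + 2 * j)),
      sum_range_succ (fun j ↦ p ^ (e + 2 * j)) (f + 2),
      show e + 1 + 2 * (f + 1) = e + 2 * f + 2 + 1 by ring,
      show e + 2 + 2 * f = e + 2 * f + 2 by ring,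
      show e + 2 * (f + 2) = e + 2 * f + 2 + 2 by ring]
    omega

theorem strictConvexUpTo_of_eq_sum {p A B g n : ℕ} {v : ℕ → ℕ} (hp : 2 ≤ p) (hg : 0 < g)
    (hv : ∀ f, v f = A * (∑ i ∈ range (n - f), p ^ i)
        + B * (∑ j ∈ range f, p ^ (n - f + 2 * j))
        + g * p ^ (n + f)) :
    StrictConvexUpTo v n := by
  intro f hf
  obtain ⟨e, rfl⟩ : ∃ e, n = e + f + 2 := ⟨n - f - 2, by omega⟩
  rw [hv, hv, hv, show e + f + 2 - f = e + 2 by omega, show e + f + 2 - (f + 1) = e + 1 by omega,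
    show e + f + 2 - (f + 2) = e by omega, show e + f + 2 + f = e + 2 * f + 2 by ring,
    show e + f + 2 + (f + 1) = e + 2 * f + 2 + 1 by ring,
    show e + f + 2 + (f + 2) = e + 2 * f + 2 + 2 by ring]
  have hA := Nat.mul_le_mul_left A (two_mul_geom_sum_succ_le (by omega : 1 ≤ p) e)
  have hB := Nat.mul_le_mul_left B (two_mul_sum_pow_odd_le p e f)
  have hC := Nat.mul_lt_mul_of_pos_left (two_mul_pow_succ_lt hp (e + 2 * f + 2)) hg
  linarith

theorem min_occurs_consecutively_general
    (p : ℕ) (hp : p.Prime)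
    (A B g : ℕ) (hg : 0 < g)
    (n : ℕ) (v : ℕ → ℕ)
    (hv : ∀ f, v f = A * (∑ i ∈ Finset.range (n - f), p ^ i)
        + B * (∑ j ∈ Finset.range f, p ^ (n - f + 2 * j))
        + g * p ^ (n + f)) :
    (∀ f₁ f₂, f₁ < f₂ → f₂ ≤ n → f₁ + 1 < f₂ → v f₁ = v f₂ → v (f₂ - 1) < v f₂) ∧
    (∀ f₁ f₂, f₁ < f₂ → f₂ ≤ n →
      (∀ f, f ≤ n → v f₁ ≤ v f) → (∀ f, f ≤ n → v f₂ ≤ v f) → f₂ = f₁ + 1) := by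
  have hconv := strictConvexUpTo_of_eq_sum hp.two_le hg hv
  exact ⟨fun _ _ _ hf₂ hgap heq ↦ hconv.pred_lt_of_eq hgap hf₂ heq,
    fun _ _ hlt hf₂ h₁ h₂ ↦ hconv.eq_succ_of_isMinOn hlt hf₂ h₁ h₂⟩

/-- Lemma 6.5 (consec): for
`v(f) = A(1+p+⋯+p^{n−f−1}) + B(p^{n−f}+p^{n−f+2}+⋯+p^{n+f−2}) + g·p^{n+f}`,
if `v(f₁) = v(f₂)` with `f₁ + 1 < f₂ ≤ n` then `v(f₂) > v(f₂−1)`; consequently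
the minimum of `v` on `{0,…,n}` is attained at most twice, and if twice then at
consecutive values. -/
theorem min_occurs_consecutively
    (p : ℕ) (hp : p.Prime) (hp2 : p ≠ 2)
    (A B g : ℕ) (hA : 0 < A) (hB : 0 < B) (hg : 0 < g)
    (n : ℕ) (v : ℕ → ℕ)
    (hv : ∀ f, v f = A * (∑ i ∈ Finset.range (n - f), p ^ i)
        + B * (∑ j ∈ Finset.range f, p ^ (n - f + 2 * j))
        + g * p ^ (n + f)) :
    (∀ f₁ f₂, f₁ < f₂ → f₂ ≤ n → f₁ + 1 < f₂ → v f₁ = v f₂ → v (f₂ - 1) < v f₂) ∧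
    (∀ f₁ f₂, f₁ < f₂ → f₂ ≤ n →
      (∀ f, f ≤ n → v f₁ ≤ v f) → (∀ f, f ≤ n → v f₂ ≤ v f) → f₂ = f₁ + 1) :=
  min_occurs_consecutively_general p hp A B g hg n v hv
end

section
/- Let p be an odd prime, and let A, B, a, b, c be positive integers with a + b = 2c, a ≠ b, and A ≥ B ≥ p + 1. Fix an integer n ≥ 1 and, for a positive integer g and an integer 0 ≤ f ≤ n, define v_g(f) = A·∑_{i=0}^{n−f−1} p^i + B·∑_{j=0}^{f−1} p^{n−f+2j} + g·p^{n+f}. Then there do NOT exist integers f_a, f_b, f_c with 1 ≤ f_a, f_b, f_c ≤ n such that v_a(f_a) = v_a(f_a − 1), v_b(f_b) = v_b(f_b − 1), and v_c(f_c) = v_c(f_c − 1) hold simultaneously. Equivalently, at most two of the three numbers g ∈ {a, b, c} admit an integer f with v_g(f) = v_g(f − 1). -/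
/-!
Multiplying by `p² - 1` sums the geometric series in `v_g(f)`, and `v_g(f) = v_g(f - 1)` becomes
`p^(2f-1) · (B + g(p² - 1)) = (p + 1)A - B`. The right side `N` does not depend on `g`, so
`M_g = B + g(p² - 1)` is `N / p^(2f_g - 1)`. Since `a + b = 2c` makes `M_a, M_c, M_b` an arithmetic
progression and `a ≠ b` forces `f_a ≠ f_b`, clearing denominators gives `2 p^x = p^y + p^z` with
`y ≠ z`, which is impossible: for `y < z`, `p^(y+1)` divides the left side and `p^z` but not `p^y`.
-/

open Finset

def candidateValuation (p A B n g f : ℕ) : ℕ :=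
  A * (∑ i ∈ range (n - f), p ^ i) + B * (∑ j ∈ range f, p ^ (n - f + 2 * j)) + g * p ^ (n + f)

lemma two_mul_pow_ne_pow_add_pow {p : ℕ} (hp : 2 ≤ p) (x : ℕ) {y z : ℕ} (hyz : y ≠ z) :
    2 * p ^ x ≠ p ^ y + p ^ z := by
  wlog hlt : y < z generalizing y z
  · rw [add_comm]; exact this hyz.symm (by omega)
  intro h
  have hyx : y < x := by
    have : p ^ y < p ^ x := by nlinarith [Nat.pow_lt_pow_right hp hlt]
    exact (Nat.pow_lt_pow_iff_right (by omega)).mp this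
  have hdvd : p ^ (y + 1) ∣ p ^ y + p ^ z := by
    rw [← h]; exact (pow_dvd_pow p hyx).mul_left 2
  have := (Nat.dvd_add_left (pow_dvd_pow p hlt)).mp hdvd
  exact absurd ((Nat.pow_dvd_pow_iff_le_right hp).mp this) (by omega)

lemma eq_of_pow_mul_eq_of_add_eq_two_mul {p : ℕ} (hp : 2 ≤ p) {x y z : ℕ} {N a b c : ℤ}
    (ha : (p : ℤ) ^ x * a = N) (hb : (p : ℤ) ^ y * b = N) (hc : (p : ℤ) ^ z * c = N)
    (habc : a + b = 2 * c) : a = b := by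
  have hp0 (k : ℕ) : (p : ℤ) ^ k ≠ 0 := pow_ne_zero k (by exact_mod_cast (by omega : p ≠ 0))
  by_contra hab
  have hN : N ≠ 0 := by
    rintro rfl
    rw [(mul_eq_zero.mp ha).resolve_left (hp0 x), (mul_eq_zero.mp hb).resolve_left (hp0 y)] at hab
    exact hab rfl
  have hxy : x ≠ y := by
    rintro rfl
    exact hab (mul_left_cancel₀ (hp0 x) (ha.trans hb.symm))
  have hpow : (2 * p ^ (x + y) : ℤ) = p ^ (z + y) + p ^ (z + x) := by
    refine mul_left_cancel₀ hN ?_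
    linear_combination (-2 * (p : ℤ) ^ (x + y)) * hc + (p : ℤ) ^ (z + y) * ha
      + (p : ℤ) ^ (z + x) * hb - (p : ℤ) ^ (x + y + z) * habc
  exact two_mul_pow_ne_pow_add_pow hp _ (by omega : z + y ≠ z + x) (by exact_mod_cast hpow)

lemma sq_sub_one_mul_candidateValuation (p A B g : ℕ) {n f : ℕ} (hf : f ≤ n) :
    ((p : ℤ) ^ 2 - 1) * candidateValuation p A B n g f
      = (p + 1) * A * (p ^ (n - f) - 1) + B * (p ^ (n + f) - p ^ (n - f))
        + g * (p ^ 2 - 1) * p ^ (n + f) := by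
  obtain ⟨m, rfl⟩ : ∃ m, n = m + f := ⟨n - f, by omega⟩
  have hA : ((p : ℤ) - 1) * ∑ i ∈ range m, (p : ℤ) ^ i = p ^ m - 1 := mul_geom_sum _ _
  have hB : ((p : ℤ) ^ 2 - 1) * ∑ j ∈ range f, (p : ℤ) ^ (m + 2 * j)
      = p ^ m * (p ^ (2 * f) - 1) := by
    simp_rw [pow_add, pow_mul, ← mul_sum]
    rw [mul_left_comm, mul_geom_sum]
  simp only [candidateValuation, Nat.add_sub_cancel]
  push_cast
  linear_combination (p + 1 : ℤ) * A * hA + B * hB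

lemma pow_mul_eq_of_candidateValuation_eq {p A B n g f : ℕ} (hp : 1 < p)
    (hf : 1 ≤ f) (hfn : f ≤ n)
    (h : candidateValuation p A B n g f = candidateValuation p A B n g (f - 1)) :
    (p : ℤ) ^ (2 * f - 1) * (B + g * (p ^ 2 - 1)) = (p + 1) * A - B := by
  obtain ⟨k, rfl⟩ : ∃ k, f = k + 1 := ⟨f - 1, by omega⟩
  obtain ⟨m, rfl⟩ : ∃ m, n = m + (k + 1) := ⟨n - (k + 1), by omega⟩
  have hv₁ := sq_sub_one_mul_candidateValuation p A B g hfn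
  have hv₀ := sq_sub_one_mul_candidateValuation p A B g (by omega : k ≤ m + (k + 1))
  simp only [Nat.add_sub_cancel, show m + (k + 1) - k = m + 1 by omega,
    show m + (k + 1) + (k + 1) = m + (2 * k + 1) + 1 by omega,
    show m + (k + 1) + k = m + (2 * k + 1) by omega,
    show 2 * (k + 1) - 1 = 2 * k + 1 by omega] at h hv₁ hv₀ ⊢
  have hfactored : ((p : ℤ) - 1) * p ^ m
      * (p ^ (2 * k + 1) * (B + g * (p ^ 2 - 1)) - ((p + 1) * A - B)) = 0 := by
    linear_combination hv₀ - hv₁ + ((p : ℤ) ^ 2 - 1) * congrArg (Nat.cast (R := ℤ)) h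
  have hp1 : (p : ℤ) - 1 ≠ 0 := by omega
  have hpm : (p : ℤ) ^ m ≠ 0 := pow_ne_zero _ (by omega)
  simpa [sub_eq_zero, hp1, hpm] using hfactored

theorem at_most_two_coincidences_general
    (p : ℕ) (hp : p.Prime)
    (A B a b c : ℕ)
    (habc : a + b = 2 * c) (hab : a ≠ b)
    (n : ℕ)
    (v : ℕ → ℕ → ℕ)
    (hv : ∀ g f, v g f = A * (∑ i ∈ Finset.range (n - f), p ^ i)
        + B * (∑ j ∈ Finset.range f, p ^ (n - f + 2 * j))
        + g * p ^ (n + f)) :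
    ¬ ∃ fa fb fc : ℕ,
        (1 ≤ fa ∧ fa ≤ n) ∧ (1 ≤ fb ∧ fb ≤ n) ∧ (1 ≤ fc ∧ fc ≤ n) ∧
        v a fa = v a (fa - 1) ∧ v b fb = v b (fb - 1) ∧ v c fc = v c (fc - 1) := by
  obtain rfl : v = candidateValuation p A B n := funext₂ hv
  rintro ⟨fa, fb, fc, ⟨hfa, hfa'⟩, ⟨hfb, hfb'⟩, ⟨hfc, hfc'⟩, hva, hvb, hvc⟩
  have hM : ((B : ℤ) + a * (p ^ 2 - 1)) = B + b * (p ^ 2 - 1) :=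
    eq_of_pow_mul_eq_of_add_eq_two_mul hp.two_le
      (pow_mul_eq_of_candidateValuation_eq hp.one_lt hfa hfa' hva)
      (pow_mul_eq_of_candidateValuation_eq hp.one_lt hfb hfb' hvb)
      (pow_mul_eq_of_candidateValuation_eq hp.one_lt hfc hfc' hvc)
      (by linear_combination ((p : ℤ) ^ 2 - 1) * (by exact_mod_cast habc : (a + b : ℤ) = 2 * c))
  have hp2 : (p : ℤ) ^ 2 - 1 ≠ 0 := by nlinarith [hp.two_le]
  exact hab (by exact_mod_cast mul_right_cancel₀ hp2 (add_left_cancel hM))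

/-- Lemma 6.6 (onlytwo): with `a + b = 2c`, `a ≠ b`, `A ≥ B ≥ p + 1`, the three
equalities `v_g(f_g) = v_g(f_g − 1)` (for `g = a, b, c` and `1 ≤ f_g ≤ n`) cannot
hold simultaneously. -/
theorem at_most_two_coincidences
    (p : ℕ) (hp : p.Prime) (hp2 : p ≠ 2)
    (A B a b c : ℕ) (hA : 0 < A) (hB : 0 < B)
    (ha : 0 < a) (hb : 0 < b) (hc : 0 < c)
    (habc : a + b = 2 * c) (hab : a ≠ b)
    (hAB : B ≤ A) (hBp : p + 1 ≤ B)
    (n : ℕ) (hn : 1 ≤ n)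
    (v : ℕ → ℕ → ℕ)
    (hv : ∀ g f, v g f = A * (∑ i ∈ Finset.range (n - f), p ^ i)
        + B * (∑ j ∈ Finset.range f, p ^ (n - f + 2 * j))
        + g * p ^ (n + f)) :
    ¬ ∃ fa fb fc : ℕ,
        (1 ≤ fa ∧ fa ≤ n) ∧ (1 ≤ fb ∧ fb ≤ n) ∧ (1 ≤ fc ∧ fc ≤ n) ∧
        v a fa = v a (fa - 1) ∧ v b fb = v b (fb - 1) ∧ v c fc = v c (fc - 1) :=
  at_most_two_coincidences_general p hp A B a b c habc hab n v hv
end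

section
/- Let p be an odd prime and let A, B, e, n be positive integers with 1 ≤ e ≤ n and B·(1 + p^{2e−1}) < A·(1 + p) < B·(1 + p^{2e+1}). For integers 0 ≤ f ≤ n define w(f) = A·∑_{i=0}^{n−f} p^i + B·∑_{j=0}^{f−1} p^{n−f+1+2j}. Then w(e) < w(f) for every f ∈ {0, 1, …, n} with f ≠ e. -/
/-!
Clearing the denominators of the two geometric sums gives
`(p² - 1)(w(f+1) - w(f)) = p^(n-f) (p - 1) (B(p^(2f+1) + 1) - A(p + 1))`,
so `w` strictly decreases while `2f + 1 ≤ 2e - 1` and strictly increases from `f = e` on.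
-/

open Finset

theorem Nat.apply_lt_of_strict_descent_ascent {α : Type*} [Preorder α] {u : ℕ → α} {e n : ℕ}
    (hdesc : ∀ f < e, u (f + 1) < u f) (hasc : ∀ f, e ≤ f → f < n → u f < u (f + 1))
    {f : ℕ} (hfn : f ≤ n) (hfe : f ≠ e) : u e < u f := by
  rcases hfe.lt_or_gt with hlt | hgt
  · exact strictAntiOn_Iic_of_succ_lt (fun m hm ↦ by simpa using hdesc m hm)
      (Set.mem_Iic.2 hlt.le) (Set.mem_Iic.2 le_rfl) hlt
  · refine strictMonoOn_of_lt_succ Set.ordConnected_Icc (fun m _ hm hm' ↦ ?_)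
      (Set.left_mem_Icc.2 (hgt.le.trans hfn)) ⟨hgt.le, hfn⟩ hgt
    rw [Order.succ_eq_add_one] at hm' ⊢
    exact hasc m hm.1 (by grind)

section Weight

variable {R : Type*} [CommRing R] (x A B : R) (n : ℕ)

def weight (f : ℕ) : R :=
  A * ∑ i ∈ range (n - f + 1), x ^ i + B * ∑ j ∈ range f, x ^ (n - f + 1 + 2 * j)

theorem sq_sub_one_mul_weight (f : ℕ) :
    (x ^ 2 - 1) * weight x A B n f
      = A * (x + 1) * (x ^ (n - f + 1) - 1) + B * x ^ (n - f + 1) * (x ^ (2 * f) - 1) := by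
  have hgeom : (∑ i ∈ range (n - f + 1), x ^ i) * (x - 1) = x ^ (n - f + 1) - 1 := geom_sum_mul x _
  have hgeom_sq : (∑ j ∈ range f, (x ^ 2) ^ j) * (x ^ 2 - 1) = x ^ (2 * f) - 1 := by
    rw [geom_sum_mul, ← pow_mul]
  have hshift :
      ∑ j ∈ range f, x ^ (n - f + 1 + 2 * j) = x ^ (n - f + 1) * ∑ j ∈ range f, (x ^ 2) ^ j := by
    simp only [mul_sum, pow_add, pow_mul]
  rw [weight, hshift]
  linear_combination A * (x + 1) * hgeom + B * x ^ (n - f + 1) * hgeom_sq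

theorem sq_sub_one_mul_weight_succ_sub {f : ℕ} (hf : f < n) :
    (x ^ 2 - 1) * (weight x A B n (f + 1) - weight x A B n f)
      = x ^ (n - f) * (x - 1) * (B * (x ^ (2 * f + 1) + 1) - A * (x + 1)) := by
  have hsucc := sq_sub_one_mul_weight x A B n (f + 1)
  rw [show n - (f + 1) + 1 = n - f by omega] at hsucc
  linear_combination hsucc - sq_sub_one_mul_weight x A B n f

variable [LinearOrder R] [IsStrictOrderedRing R] {x A B n}

theorem weight_lt_weight_succ_iff (hx : 1 < x) {f : ℕ} (hf : f < n) :
    weight x A B n f < weight x A B n (f + 1) ↔ A * (x + 1) < B * (x ^ (2 * f + 1) + 1) := by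
  have hsq : 0 < x ^ 2 - 1 := by nlinarith
  have hc : 0 < x ^ (n - f) * (x - 1) := mul_pos (pow_pos (zero_lt_one.trans hx) _) (sub_pos.2 hx)
  rw [← sub_pos, ← mul_pos_iff_of_pos_left hsq, sq_sub_one_mul_weight_succ_sub x A B n hf,
    mul_pos_iff_of_pos_left hc, sub_pos]

theorem weight_succ_lt_weight_iff (hx : 1 < x) {f : ℕ} (hf : f < n) :
    weight x A B n (f + 1) < weight x A B n f ↔ B * (x ^ (2 * f + 1) + 1) < A * (x + 1) := by
  have hsq : 0 < x ^ 2 - 1 := by nlinarith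
  have hc : 0 < x ^ (n - f) * (x - 1) := mul_pos (pow_pos (zero_lt_one.trans hx) _) (sub_pos.2 hx)
  rw [← sub_pos, ← mul_pos_iff_of_pos_left hsq, ← neg_sub (weight x A B n (f + 1)), mul_neg,
    sq_sub_one_mul_weight_succ_sub x A B n hf, ← mul_neg, neg_sub, mul_pos_iff_of_pos_left hc,
    sub_pos]

end Weight

theorem unique_minimum_strict_case_general
    (p : ℕ)
    (A B e n : ℕ) (hen : e ≤ n)
    (h1 : B * (1 + p ^ (2 * e - 1)) < A * (1 + p))
    (h2 : A * (1 + p) < B * (1 + p ^ (2 * e + 1)))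
    (w : ℕ → ℕ)
    (hw : ∀ f, w f = A * (∑ i ∈ Finset.range (n - f + 1), p ^ i)
        + B * (∑ j ∈ Finset.range f, p ^ (n - f + 1 + 2 * j))) :
    ∀ f, f ≤ n → f ≠ e → w e < w f := by
  have hp1 : 1 < p := by
    by_contra! hp1
    have := pow_le_pow_of_le_one (Nat.zero_le p) hp1 (show 2 * e - 1 ≤ 2 * e + 1 by omega)
    nlinarith
  have hx : (1 : ℤ) < p := by exact_mod_cast hp1
  have hcast : ∀ f, (w f : ℤ) = weight (p : ℤ) A B n f := fun f ↦ by simp [hw, weight]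
  intro f hfn hfe
  suffices (w e : ℤ) < w f by exact_mod_cast this
  simp only [hcast]
  refine Nat.apply_lt_of_strict_descent_ascent (fun f hf ↦ ?_) (fun f hef hfn ↦ ?_) hfn hfe
  · rw [weight_succ_lt_weight_iff hx (by omega)]
    have := Nat.pow_le_pow_right hp1.le (show 2 * f + 1 ≤ 2 * e - 1 by omega)
    exact_mod_cast (by nlinarith : B * (p ^ (2 * f + 1) + 1) < A * (p + 1))
  · rw [weight_lt_weight_succ_iff hx hfn]
    have := Nat.pow_le_pow_right hp1.le (show 2 * e + 1 ≤ 2 * f + 1 by omega)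
    exact_mod_cast (by nlinarith : A * (p + 1) < B * (p ^ (2 * f + 1) + 1))

/-- Lemma 6.4 (twonetopleft), arithmetic content: if
`B(1+p^{2e−1}) < A(1+p) < B(1+p^{2e+1})` with `1 ≤ e ≤ n`, then
`w(f) = A(1+⋯+p^{n−f}) + B(p^{n−f+1}+p^{n−f+3}+⋯+p^{n+f−1})` has a strict
unique minimum on `{0,…,n}` at `f = e`. -/
theorem unique_minimum_strict_case
    (p : ℕ) (hp : p.Prime) (hp2 : p ≠ 2)
    (A B e n : ℕ) (hA : 0 < A) (hB : 0 < B) (he : 1 ≤ e) (hen : e ≤ n)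
    (h1 : B * (1 + p ^ (2 * e - 1)) < A * (1 + p))
    (h2 : A * (1 + p) < B * (1 + p ^ (2 * e + 1)))
    (w : ℕ → ℕ)
    (hw : ∀ f, w f = A * (∑ i ∈ Finset.range (n - f + 1), p ^ i)
        + B * (∑ j ∈ Finset.range f, p ^ (n - f + 1 + 2 * j))) :
    ∀ f, f ≤ n → f ≠ e → w e < w f :=
  unique_minimum_strict_case_general p A B e n hen h1 h2 w hw
end

section
/- Let p be an odd prime, k a field of characteristic p, λ ∈ k with λ^p = −λ and λ ≠ 0, and c ∈ k with c ≠ 0. Let 𝐁 be the 5×5 matrix over k whose rows are (−1/2, λ/2, 0, c/2, 0), (−1/(2λ), 1/2, 0, c/(2λ), 0), (c, −cλ, 0, −c², 0), (0,0,0,0,0), (0,0,0,0,0). For n ≥ 1 set 𝐁ₙ = 𝐁·𝐁^{(1)}⋯𝐁^{(n)}, where 𝐁^{(i)} is obtained by raising every entry to the p^i-th power, and let S^{(n−1)} be the row vector (1, λ^{p^{n−1}}, 0, −c^{pⁿ}, 0). Then the fourth and fifth rows of 𝐁ₙ are zero, each of the first three rows of 𝐁ₙ is a NONZERO k-scalar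 multiple of S^{(n−1)}, and in particular 𝐁ₙ has rank exactly 1. -/
/-!
The matrix `𝐁` is the rank-one matrix `u vᵀ` with `u = (1, λ⁻¹, -2c, 0, 0)` and
`v = (-1/2, λ/2, 0, c/2, 0)`, so its twists are the rank-one matrices `u^{(i)} v^{(i)ᵀ}` and the
product telescopes to `𝐁ₙ = (∏_{i<n} v^{(i)} ⬝ u^{(i+1)}) · u v^{(n)ᵀ}`. As `x ↦ x ^ p ^ i` is a
ring endomorphism, `v^{(i)} ⬝ u^{(i+1)} = (v ⬝ u^{(1)})^{p^i}`, and `λ^p = -λ` gives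
`v ⬝ u^{(1)} = -1`; since `p` is odd, `v^{(n)} = -2^{-p^n} S^{(n-1)}`.
-/

namespace Matrix

variable {m n R : Type*}

theorem list_prod_map_range_vecMulVec [CommSemiring R] [Fintype n] [DecidableEq n]
    (u v : ℕ → n → R) (N : ℕ) :
    ((List.range (N + 1)).map fun i => vecMulVec (u i) (v i)).prod =
      (∏ i ∈ Finset.range N, v i ⬝ᵥ u (i + 1)) • vecMulVec (u 0) (v N) := by
  induction N with
  | zero => simp
  | succ N ih =>
    rw [List.range_succ, List.map_append, List.prod_append, ih, Finset.prod_range_succ]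
    simp [vecMulVec_mul_vecMulVec, smul_smul]

theorem map_vecMulVec_pow [CommMonoid R] (u : m → R) (v : n → R) (k : ℕ) :
    (vecMulVec u v).map (· ^ k) = vecMulVec (u ^ k) (v ^ k) := by
  ext i j
  simp [vecMulVec_apply, mul_pow]

theorem dotProduct_pow_char_pow [CommSemiring R] [Fintype n] (p : ℕ) [ExpChar R p]
    (v w : n → R) (k : ℕ) : (v ⬝ᵥ w) ^ p ^ k = v ^ p ^ k ⬝ᵥ w ^ p ^ k :=
  RingHom.map_dotProduct (iterateFrobenius R p k) v w

theorem list_prod_map_range_map_pow_vecMulVec [CommSemiring R] [Fintype n] [DecidableEq n]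
    (p : ℕ) [ExpChar R p] (u v : n → R) (N : ℕ) :
    ((List.range (N + 1)).map fun i => (vecMulVec u v).map (· ^ p ^ i)).prod =
      (∏ i ∈ Finset.range N, (v ⬝ᵥ u ^ p) ^ p ^ i) • vecMulVec u (v ^ p ^ N) := by
  simp_rw [map_vecMulVec_pow, list_prod_map_range_vecMulVec, dotProduct_pow_char_pow,
    ← pow_mul, ← pow_succ', pow_zero, pow_one]

theorem rank_eq_zero_iff {K : Type*} [Field K] [Fintype m] [Fintype n] [DecidableEq n]
    {M : Matrix m n K} : M.rank = 0 ↔ M = 0 := by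
  rw [rank, Submodule.finrank_eq_zero, LinearMap.range_eq_bot, ← toLin'_apply',
    LinearEquiv.map_eq_zero_iff]

theorem rank_vecMulVec_eq_one {K : Type*} [Field K] [Fintype m] [Fintype n] [DecidableEq n]
    {u : m → K} {v : n → K} (hu : u ≠ 0) (hv : v ≠ 0) : (vecMulVec u v).rank = 1 :=
  (rank_vecMulVec_le u v).antisymm <| Nat.one_le_iff_ne_zero.mpr <| rank_eq_zero_iff.not.mpr
    fun h => by
      obtain ⟨i, hi⟩ := Function.ne_iff.mp hu
      exact (smul_eq_zero.mp (congr_fun h i)).elim hi hv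

end Matrix

open Matrix

section Supergeneric

variable {k : Type*} [Field k]

def supergenericCol (lam c : k) : Fin 5 → k := ![1, lam⁻¹, -(2 * c), 0, 0]

def supergenericRow (lam c : k) : Fin 5 → k := ![-1/2, lam/2, 0, c/2, 0]

theorem supergeneric_eq_vecMulVec {lam c : k} (h2 : (2 : k) ≠ 0) (hlam0 : lam ≠ 0) :
    !![-1/2, lam/2, 0, c/2, 0;
       -1/(2*lam), 1/2, 0, c/(2*lam), 0;
       c, -(c*lam), 0, -(c^2), 0;
       0, 0, 0, 0, 0;
       0, 0, 0, 0, 0] = vecMulVec (supergenericCol lam c) (supergenericRow lam c) := by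
  ext i j
  fin_cases i <;> fin_cases j <;>
    simp [vecMulVec_apply, supergenericCol, supergenericRow] <;> field_simp

theorem supergenericCol_ne_zero {lam c : k} (h2 : (2 : k) ≠ 0) (hlam0 : lam ≠ 0) (hc : c ≠ 0)
    {i : Fin 5} (hi : (i : ℕ) < 3) : supergenericCol lam c i ≠ 0 := by
  fin_cases i <;> simp_all [supergenericCol]

theorem supergenericRow_dotProduct_supergenericCol_pow {p : ℕ} {lam c : k} (h2 : (2 : k) ≠ 0)
    (hp : p ≠ 0) (hlam : lam ^ p = -lam) (hlam0 : lam ≠ 0) :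
    supergenericRow lam c ⬝ᵥ supergenericCol lam c ^ p = -1 := by
  simp [dotProduct, Fin.sum_univ_five, supergenericCol, supergenericRow, inv_pow, hlam, hp]
  field_simp
  ring

theorem supergenericRow_pow {p : ℕ} {lam : k} (c : k) (hp : Odd p) (hlam : lam ^ p = -lam)
    (n : ℕ) : supergenericRow lam c ^ p ^ (n + 1) =
      -((2 : k)⁻¹ ^ p ^ (n + 1)) • ![1, lam ^ p ^ n, 0, -(c ^ p ^ (n + 1)), 0] := by
  have hodd : Odd (p ^ (n + 1)) := hp.pow
  have hlam' : lam ^ p ^ (n + 1) = -lam ^ p ^ n := by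
    rw [pow_succ', pow_mul, hlam, hp.pow.neg_pow]
  ext j
  fin_cases j <;>
    simp [supergenericRow, div_eq_mul_inv, mul_pow, inv_pow, hodd.neg_pow, hlam', hp.pos.ne'] <;>
    ring

end Supergeneric

/-- Lemma A.2(2) (lingen), mod-p form: for the supergeneric matrix `𝐁` and its
twisted products `𝐁ₙ = 𝐁·𝐁^{(1)}⋯𝐁^{(n)}`, the fourth and fifth rows of `𝐁ₙ`
vanish, each of the first three rows is a nonzero scalar multiple of
`S^{(n−1)} = (1, λ^{p^{n−1}}, 0, −c^{pⁿ}, 0)`, and `𝐁ₙ` has rank exactly 1. -/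
theorem supergeneric_rank_one
    (p : ℕ) (hp : p.Prime) (hp2 : p ≠ 2)
    (k : Type*) [Field k] [CharP k p]
    (lam : k) (hlam : lam ^ p = -lam) (hlam0 : lam ≠ 0)
    (c : k) (hc : c ≠ 0)
    (B : Matrix (Fin 5) (Fin 5) k)
    (hB : B = !![-1/2, lam/2, 0, c/2, 0;
                 -1/(2*lam), 1/2, 0, c/(2*lam), 0;
                 c, -(c*lam), 0, -(c^2), 0;
                 0, 0, 0, 0, 0;
                 0, 0, 0, 0, 0])
    (Bn : ℕ → Matrix (Fin 5) (Fin 5) k)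
    (hBn : ∀ n, Bn n =
      ((List.range (n + 1)).map (fun i => B.map (fun x => x ^ p ^ i))).prod) :
    ∀ n, 1 ≤ n →
      (Bn n) 3 = 0 ∧ (Bn n) 4 = 0 ∧
      (∀ i : Fin 5, (i : ℕ) < 3 → ∃ d : k, d ≠ 0 ∧
        (Bn n) i = d • ![1, lam ^ p ^ (n - 1), 0, -(c ^ p ^ n), 0]) ∧
      (Bn n).rank = 1 := by
  intro n hn
  obtain ⟨n, rfl⟩ := Nat.exists_eq_add_of_le' hn
  have : ExpChar k p := ExpChar.prime hp
  have h2 : (2 : k) ≠ 0 := Ring.two_ne_zero (by rwa [ringChar.eq k p])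
  set e : k := (∏ i ∈ Finset.range (n + 1), (-1 : k) ^ p ^ i) * -((2 : k)⁻¹ ^ p ^ (n + 1))
  have he : e ≠ 0 := mul_ne_zero
    (Finset.prod_ne_zero_iff.mpr fun _ _ => pow_ne_zero _ (neg_ne_zero.mpr one_ne_zero))
    (neg_ne_zero.mpr (pow_ne_zero _ (inv_ne_zero h2)))
  have hprod : Bn (n + 1) = vecMulVec (e • supergenericCol lam c)
      ![1, lam ^ p ^ n, 0, -(c ^ p ^ (n + 1)), 0] := by
    rw [hBn, hB, supergeneric_eq_vecMulVec h2 hlam0, list_prod_map_range_map_pow_vecMulVec,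
      supergenericRow_dotProduct_supergenericCol_pow h2 hp.ne_zero hlam hlam0,
      supergenericRow_pow c (hp.odd_of_ne_two hp2) hlam, vecMulVec_smul, smul_vecMulVec, smul_smul]
  have hrow : ∀ i, Bn (n + 1) i =
      (e * supergenericCol lam c i) • ![1, lam ^ p ^ n, 0, -(c ^ p ^ (n + 1)), 0] := by
    intro i
    rw [hprod]
    rfl
  rw [Nat.add_sub_cancel]
  refine ⟨by simp [hrow, supergenericCol], by simp [hrow, supergenericCol],
    fun i hi => ⟨_, mul_ne_zero he (supergenericCol_ne_zero h2 hlam0 hc hi), hrow i⟩, ?_⟩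
  rw [hprod]
  exact rank_vecMulVec_eq_one
    (smul_ne_zero he (Function.ne_iff.mpr ⟨0, by simp [supergenericCol]⟩))
    (Function.ne_iff.mpr ⟨0, by simp⟩)
end

section
/- Let p be an odd prime and k a field of characteristic p. Let ε, β, γ ∈ k with ε ≠ 0, ε^p = ε, γ^p = γ, γ ≠ 0, and β + γ²/(4ε) = 0. Let a ≥ 1 be an integer and let x = t^a, y = β·t^a + ∑_{i>a} βᵢtⁱ, and z = γ·t^a + ∑_{i>a} γᵢtⁱ be elements of the power series ring k[[t]], and suppose the tails are not both identically zero; let a' > a denote the smallest integer with βₐ' ≠ 0 or γₐ' ≠ 0. Let A be the t-adic order of x·y + z²/(4ε) and B the t-adic order of x·y^p + x^p·y + z^{1+p}/(2ε) (orders taken in ℕ ∪ {∞}). If A ≥ B, then both βₐ' ≠ 0 and γₐ' ≠ 0, and moreover B ≥ (p − 1)·a + 2·a'. -/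
/-!
Put `e = 1/(4ε)` and `δ = 2γe = γ/(2ε)`. Because `β + γ²e = 0`, the substitution
`y ↦ y - βx + δ(z - γx)`, `z ↦ z - γx` preserves the quadratic form `Q = xy + ez²`; its
coefficients are fixed by Frobenius, so it also preserves the Frobenius-twisted polar form
`xy^p + x^p y + 2e z^(1+p)`. It sends `(t^a, y, z)` to `(t^a, w, v)` with `w` and `v` of order
`≥ a'`, and `Q = t^a w + e v²`. If `m = ord w < 2a' - a`, then `Q` has order exactly `a + m`,
whereas the polar form has order `≥ min(a + pm, pa + m, (1 + p)a') > a + m`, against `A ≥ B`.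
So `ord w ≥ 2a' - a > a'`, i.e. `y_{a'} + δ z_{a'} = 0`, which forces both coefficients to be
nonzero; the same estimate then gives `B ≥ (p - 1)a + 2a'`.
-/

open PowerSeries

section Forms

variable {S : Type*} [CommRing S]

def quadForm (e x y z : S) : S := x * y + e * z ^ 2

def frobeniusPolar (p : ℕ) (e x y z : S) : S := x * y ^ p + x ^ p * y + 2 * e * z ^ (1 + p)

theorem quadForm_shear {b c e x u v : S} (h : b + c ^ 2 * e = 0) :
    quadForm e x (b * x + u) (c * x + v) = quadForm e x (u + 2 * c * e * v) v := by
  unfold quadForm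
  linear_combination x ^ 2 * h

theorem frobeniusPolar_shear {p : ℕ} [Fact p.Prime] [CharP S p] {b c e x u v : S}
    (hb : b ^ p = b) (hc : c ^ p = c) (he : e ^ p = e) (h : b + c ^ 2 * e = 0) :
    frobeniusPolar p e x (b * x + u) (c * x + v) =
      frobeniusPolar p e x (u + 2 * c * e * v) v := by
  have h2 : (2 : S) ^ p = 2 := by rw [← frobenius_def, map_ofNat]
  unfold frobeniusPolar
  rw [pow_add, pow_one, add_pow_char, add_pow_char, add_pow_char, mul_pow, mul_pow, mul_pow,
    mul_pow, mul_pow, hb, hc, he, h2]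
  linear_combination 2 * x ^ (1 + p) * h

end Forms

theorem ne_zero_and_ne_zero_of_add_mul_eq_zero {K : Type*} [Semiring K] [NoZeroDivisors K]
    {x y d : K} (hd : d ≠ 0) (h : x + d * y = 0) (hxy : x ≠ 0 ∨ y ≠ 0) :
    x ≠ 0 ∧ y ≠ 0 := by
  have hy : y ≠ 0 := fun hy0 => hxy.elim (fun hx => hx (by simpa [hy0] using h)) (· hy0)
  exact ⟨fun hx0 => hy (by simpa [hx0, hd] using h), hy⟩

section Order

variable {R : Type*} [CommRing R]

theorem exists_eq_C_mul_X_pow_add_of_coeff_eq_zero {f : R⟦X⟧} {a n : ℕ}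
    (h : ∀ i < n, i ≠ a → coeff i f = 0) :
    ∃ u, f = C (coeff a f) * X ^ a + u ∧ (n : ℕ∞) ≤ u.order := by
  refine ⟨f - C (coeff a f) * X ^ a, by ring, nat_le_order _ _ fun i hi => ?_⟩
  rw [map_sub, coeff_C_mul_X_pow]
  split_ifs with hia
  · rw [hia, sub_self]
  · rw [h i hi hia, sub_zero]

theorem nat_le_order_X_pow (a : ℕ) : (a : ℕ∞) ≤ ((X : R⟦X⟧) ^ a).order :=
  nat_le_order _ _ fun i hi => by rw [coeff_X_pow, if_neg hi.ne]

theorem le_order_add_of_le {f g : R⟦X⟧} {d : ℕ∞} (hf : d ≤ f.order) (hg : d ≤ g.order) :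
    d ≤ (f + g).order :=
  (le_min hf hg).trans (min_order_le_order_add f g)

theorem nat_add_le_order_mul {f g : R⟦X⟧} {m n : ℕ} (hf : (m : ℕ∞) ≤ f.order)
    (hg : (n : ℕ∞) ≤ g.order) : ((m + n : ℕ) : ℕ∞) ≤ (f * g).order := by
  push_cast
  exact (add_le_add hf hg).trans (le_order_mul f g)

theorem nat_mul_le_order_pow {f : R⟦X⟧} {m : ℕ} (hf : (m : ℕ∞) ≤ f.order) (j : ℕ) :
    ((j * m : ℕ) : ℕ∞) ≤ (f ^ j).order := by
  push_cast
  exact (nsmul_eq_mul j (m : ℕ∞) ▸ nsmul_le_nsmul_right hf j).trans (le_order_pow f j)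

theorem order_le_order_C_mul (r : R) (f : R⟦X⟧) : f.order ≤ (C r * f).order := by
  rw [← smul_eq_C_mul]
  exact le_order_smul

theorem le_order_frobeniusPolar {p a c n d : ℕ} {e w v : R⟦X⟧}
    (hw : (c : ℕ∞) ≤ w.order) (hv : (n : ℕ∞) ≤ v.order)
    (h₁ : d ≤ a + p * c) (h₂ : d ≤ p * a + c) (h₃ : d ≤ (1 + p) * n) :
    (d : ℕ∞) ≤ (frobeniusPolar p e (X ^ a) w v).order := by
  have hX := nat_le_order_X_pow (R := R) a
  refine le_order_add_of_le (le_order_add_of_le ?_ ?_) ?_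
  · exact (Nat.cast_le.2 h₁).trans (nat_add_le_order_mul hX (nat_mul_le_order_pow hw p))
  · exact (Nat.cast_le.2 h₂).trans (nat_add_le_order_mul (nat_mul_le_order_pow hX p) hw)
  · exact (Nat.cast_le.2 (h₃.trans (zero_add _).ge)).trans
      (nat_add_le_order_mul (by simp) (nat_mul_le_order_pow hv (1 + p)))

theorem order_quadForm_le {a m n : ℕ} {e w v : R⟦X⟧} (hv : (n : ℕ∞) ≤ v.order)
    (hm : a + m < 2 * n) (hw : coeff m w ≠ 0) :
    (quadForm e (X ^ a) w v).order ≤ (a + m : ℕ) := by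
  refine order_le _ ?_
  have hv2 : coeff (a + m) (e * v ^ 2) = 0 :=
    coeff_of_lt_order _ ((Nat.cast_lt.2 hm).trans_le
      ((zero_add (2 * n)).symm ▸ nat_add_le_order_mul (by simp) (nat_mul_le_order_pow hv 2)))
  rwa [quadForm, map_add, hv2, add_zero, add_comm, coeff_X_pow_mul]

theorem two_mul_sub_le_order_of_order_frobeniusPolar_le {p a n : ℕ} {e w v : R⟦X⟧}
    (hp : 2 ≤ p) (ha : 1 ≤ a) (hw : (n : ℕ∞) ≤ w.order) (hv : (n : ℕ∞) ≤ v.order)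
    (h : (frobeniusPolar p e (X ^ a) w v).order ≤ (quadForm e (X ^ a) w v).order) :
    ((2 * n - a : ℕ) : ℕ∞) ≤ w.order := by
  by_contra! hlt
  obtain ⟨m, hm⟩ := ENat.ne_top_iff_exists.1 (hlt.trans_le le_top).ne
  rw [← hm] at hlt hw
  norm_cast at hlt hw
  have ham : a + m < 2 * n := by omega
  have hQ := order_quadForm_le (e := e) hv ham (order_eq_nat.1 hm.symm).1
  have hB : ((a + m + 1 : ℕ) : ℕ∞) ≤ (frobeniusPolar p e (X ^ a) w v).order :=
    le_order_frobeniusPolar (c := m) hm.le hv (by nlinarith) (by nlinarith) (by nlinarith)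
  have := (hB.trans h).trans hQ
  norm_cast at this
  omega

theorem le_order_frobeniusPolar_of_two_mul_sub_le {p a n : ℕ} {e w v : R⟦X⟧}
    (hp : 1 ≤ p) (han : a ≤ n) (hw : ((2 * n - a : ℕ) : ℕ∞) ≤ w.order)
    (hv : (n : ℕ∞) ≤ v.order) :
    (((p - 1) * a + 2 * n : ℕ) : ℕ∞) ≤ (frobeniusPolar p e (X ^ a) w v).order := by
  obtain ⟨d, rfl⟩ := Nat.exists_eq_add_of_le han
  obtain ⟨q, rfl⟩ := Nat.exists_eq_add_of_le' hp
  rw [show 2 * (a + d) - a = a + 2 * d by omega] at hw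
  refine le_order_frobeniusPolar hw hv ?_ ?_ ?_ <;> rw [Nat.add_sub_cancel] <;> nlinarith

theorem coeff_ne_zero_and_le_order_frobeniusPolar [NoZeroDivisors R] {p : ℕ} [Fact p.Prime]
    [CharP R p] {a n : ℕ} {b c e : R} (hb : b ^ p = b) (hc : c ^ p = c) (he : e ^ p = e)
    (hbce : b + c ^ 2 * e = 0) (hce : 2 * c * e ≠ 0) (ha : 1 ≤ a) (han : a < n)
    {y z u v : R⟦X⟧} (hy : y = C b * X ^ a + u) (hz : z = C c * X ^ a + v)
    (hu : (n : ℕ∞) ≤ u.order) (hv : (n : ℕ∞) ≤ v.order)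
    (hn : coeff n y ≠ 0 ∨ coeff n z ≠ 0)
    (h : (frobeniusPolar p (C e) (X ^ a) y z).order ≤ (quadForm (C e) (X ^ a) y z).order) :
    coeff n y ≠ 0 ∧ coeff n z ≠ 0 ∧
      (((p - 1) * a + 2 * n : ℕ) : ℕ∞) ≤ (frobeniusPolar p (C e) (X ^ a) y z).order := by
  have : CharP R⟦X⟧ p := charP_of_injective_ringHom C_injective p
  have hCbce : C b + C c ^ 2 * C e = 0 := by simpa using congrArg C hbce
  set w := u + C (2 * c * e) * v
  have hQ : quadForm (C e) (X ^ a) y z = quadForm (C e) (X ^ a) w v := by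
    rw [hy, hz, quadForm_shear hCbce]
    simp only [w, map_mul, map_ofNat]
  have hB : frobeniusPolar p (C e) (X ^ a) y z = frobeniusPolar p (C e) (X ^ a) w v := by
    rw [hy, hz, frobeniusPolar_shear (by rw [← map_pow, hb]) (by rw [← map_pow, hc])
      (by rw [← map_pow, he]) hCbce]
    simp only [w, map_mul, map_ofNat]
  rw [hQ, hB] at h
  rw [hB]
  have hw := two_mul_sub_le_order_of_order_frobeniusPolar_le (Fact.out : p.Prime).two_le ha
    (le_order_add_of_le hu (hv.trans (order_le_order_C_mul _ v))) hv h
  have hwn := coeff_of_lt_order n ((Nat.cast_lt.2 (by omega : n < 2 * n - a)).trans_le hw)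
  have hcoeff : coeff n y + 2 * c * e * coeff n z = 0 := by
    simpa only [w, hy, hz, map_add, coeff_C_mul, coeff_X_pow, if_neg han.ne', mul_zero, zero_add]
      using hwn
  obtain ⟨hyn, hzn⟩ := ne_zero_and_ne_zero_of_add_mul_eq_zero hce hcoeff hn
  exact ⟨hyn, hzn,
    le_order_frobeniusPolar_of_two_mul_sub_le (Fact.out : p.Prime).one_le han.le hw hv⟩

end Order

/-- Lemma 6.8 (aftercancel): with `x = t^a`, `y = βt^a + ⋯`, `z = γt^a + ⋯`
(leading coefficients in `𝔽_p`, `β + γ²/(4ε) = 0`), `a'` the first exponent past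
`a` where `y` or `z` has a nonzero coefficient, `A = ord(xy + z²/(4ε))` and
`B = ord(xy^p + x^p y + z^{1+p}/(2ε))`: if `A ≥ B` then both coefficients at `a'`
are nonzero and `B ≥ (p−1)a + 2a'`. -/
theorem aftercancel
    (p : ℕ) (hp : p.Prime) (hp2 : p ≠ 2)
    (k : Type*) [Field k] [CharP k p]
    (ε β γ : k) (hε0 : ε ≠ 0) (hεp : ε ^ p = ε) (hγp : γ ^ p = γ) (hγ0 : γ ≠ 0)
    (hβγ : β + γ ^ 2 / (4 * ε) = 0)
    (a a' : ℕ) (ha : 1 ≤ a) (haa' : a < a')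
    (y z : PowerSeries k)
    (hylow : ∀ i < a, PowerSeries.coeff i y = 0)
    (hya : PowerSeries.coeff a y = β)
    (hzlow : ∀ i < a, PowerSeries.coeff i z = 0)
    (hza : PowerSeries.coeff a z = γ)
    (hmid : ∀ i, a < i → i < a' →
      PowerSeries.coeff i y = 0 ∧ PowerSeries.coeff i z = 0)
    (ha' : PowerSeries.coeff a' y ≠ 0 ∨ PowerSeries.coeff a' z ≠ 0)
    (hAB : (PowerSeries.X ^ a * y ^ p + (PowerSeries.X : PowerSeries k) ^ (a * p) * y
            + PowerSeries.C ((2 * ε)⁻¹) * z ^ (1 + p)).order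
          ≤ (PowerSeries.X ^ a * y + PowerSeries.C ((4 * ε)⁻¹) * z ^ 2).order) :
    PowerSeries.coeff a' y ≠ 0 ∧ PowerSeries.coeff a' z ≠ 0 ∧
    (((p - 1) * a + 2 * a' : ℕ) : ℕ∞) ≤
      (PowerSeries.X ^ a * y ^ p + (PowerSeries.X : PowerSeries k) ^ (a * p) * y
        + PowerSeries.C ((2 * ε)⁻¹) * z ^ (1 + p)).order := by
  have := Fact.mk hp
  have h2 : (2 : k) ≠ 0 := Ring.two_ne_zero (by rwa [ringChar.eq k p])
  have h4 : (4 : k) ≠ 0 := by simpa [show (4 : k) = 2 * 2 by norm_num] using mul_ne_zero h2 h2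
  set e := (4 * ε)⁻¹ with he
  have he2 : (2 * ε)⁻¹ = 2 * e := by
    rw [he]
    field_simp
    norm_num
  have hep : e ^ p = e := by rw [he, inv_pow, mul_pow, hεp, ← frobenius_def, map_ofNat]
  have hβe : β + γ ^ 2 * e = 0 := by rwa [← div_eq_mul_inv]
  have hβp : β ^ p = β := by
    rw [eq_neg_of_add_eq_zero_left hβe, (hp.odd_of_ne_two hp2).neg_pow, mul_pow, ← pow_mul,
      mul_comm 2 p, pow_mul, hγp, hep]
  obtain ⟨u, hy, hu⟩ := exists_eq_C_mul_X_pow_add_of_coeff_eq_zero (f := y) (n := a')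
    fun i hi hia => hia.lt_or_gt.elim (hylow i) fun h => (hmid i h hi).1
  obtain ⟨v, hz, hv⟩ := exists_eq_C_mul_X_pow_add_of_coeff_eq_zero (f := z) (n := a')
    fun i hi hia => hia.lt_or_gt.elim (hzlow i) fun h => (hmid i h hi).2
  have hB : X ^ a * y ^ p + X ^ (a * p) * y + C (2 * ε)⁻¹ * z ^ (1 + p) =
      frobeniusPolar p (C e) (X ^ a) y z := by
    rw [frobeniusPolar, pow_mul, he2, map_mul, map_ofNat]
  rw [hB] at hAB ⊢
  exact coeff_ne_zero_and_le_order_frobeniusPolar hβp hγp hep hβe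
    (by simp [h2, h4, hε0, hγ0, e]) ha haa' (hya ▸ hy) (hza ▸ hz) hu hv ha' hAB
end
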